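/- arXiv:math-ph/0703062 — 2 statements merged into one kernel-verified Lean document; each statement's English description precedes it below -/
import Mathlib

section
/- The complete and vertical lifts of sections of a Lie algebroid E to the prolongation T^E E satisfy the bracket relations [η^C, σ^C] = [η,σ]^C, [η^C, σ^V] = [η,σ]^V, and [η^V, σ^V] = 0 for all sections η, σ of E. -/
/-!
Complete and vertical lifts of sections of a Lie algebroid `E` to the
prolongation `T^E E`, in local coordinates.  Base `M = Fin n → ℝ`, fibered
coordinates `(x, y)` on `E` (frame index `Fin m`), structure functions
`ρ x α i`, `C x γ α β`.  Sections of `T^E E` are pairs `(Z, V)` of components in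
the frame `{𝒳_α, 𝒱_α}`, the anchor acting on functions by `rhoP`; the bracket
`(brPZ, brPV)` is determined by `[𝒳_α,𝒳_β] = C^γ_{αβ}𝒳_γ`, `[𝒳_α,𝒱_β] = 0`,
`[𝒱_α,𝒱_β] = 0` and the Leibniz rule.  For a section `η` of `E`, the vertical
lift is `η^V = η^α 𝒱_α` and the complete lift is
`η^C = η^α 𝒳_α + (ρ^i_β y^β ∂η^α/∂x^i + C^α_{βγ} y^β η^γ) 𝒱_α`; `ebr` is the
bracket of sections of `E`.  The theorem: `[η^C,σ^C] = [η,σ]^C`,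
`[η^C,σ^V] = [η,σ]^V`, `[η^V,σ^V] = 0`.
-/

open scoped BigOperators

/-- Partial derivative of `f` in the `i`-th coordinate direction. -/
noncomputable def pd {κ : Type*} [Fintype κ] [DecidableEq κ]
    (f : (κ → ℝ) → ℝ) (x : κ → ℝ) (i : κ) : ℝ :=
  fderiv ℝ f x (Pi.single i 1)

variable {n m : ℕ}

/-- Action of the anchor of a section `(Z, V)` of `T^E E` on a function on `E`. -/
noncomputable def rhoP (ρ : (Fin n → ℝ) → Fin m → Fin n → ℝ)
    (Z V : (Fin n → ℝ) → (Fin m → ℝ) → Fin m → ℝ)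
    (g : (Fin n → ℝ) → (Fin m → ℝ) → ℝ) :
    (Fin n → ℝ) → (Fin m → ℝ) → ℝ :=
  fun x y =>
    (∑ i, (∑ α, ρ x α i * Z x y α) * pd (fun x' => g x' y) x i)
      + ∑ α, V x y α * pd (fun y' => g x y') y α

/-- `𝒳`-component of the bracket of two sections of `T^E E`. -/
noncomputable def brPZ (ρ : (Fin n → ℝ) → Fin m → Fin n → ℝ)
    (C : (Fin n → ℝ) → Fin m → Fin m → Fin m → ℝ)
    (Z₁ V₁ Z₂ V₂ : (Fin n → ℝ) → (Fin m → ℝ) → Fin m → ℝ) :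
    (Fin n → ℝ) → (Fin m → ℝ) → Fin m → ℝ :=
  fun x y γ =>
    rhoP ρ Z₁ V₁ (fun x' y' => Z₂ x' y' γ) x y
      - rhoP ρ Z₂ V₂ (fun x' y' => Z₁ x' y' γ) x y
      + ∑ α, ∑ β, C x γ α β * Z₁ x y α * Z₂ x y β

/-- `𝒱`-component of the bracket of two sections of `T^E E`. -/
noncomputable def brPV (ρ : (Fin n → ℝ) → Fin m → Fin n → ℝ)
    (Z₁ V₁ Z₂ V₂ : (Fin n → ℝ) → (Fin m → ℝ) → Fin m → ℝ) :
    (Fin n → ℝ) → (Fin m → ℝ) → Fin m → ℝ :=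
  fun x y α =>
    rhoP ρ Z₁ V₁ (fun x' y' => V₂ x' y' α) x y
      - rhoP ρ Z₂ V₂ (fun x' y' => V₁ x' y' α) x y

/-- Coordinate expression of the bracket of two sections of `E`. -/
noncomputable def ebr (ρ : (Fin n → ℝ) → Fin m → Fin n → ℝ)
    (C : (Fin n → ℝ) → Fin m → Fin m → Fin m → ℝ)
    (σ η : (Fin n → ℝ) → Fin m → ℝ) : (Fin n → ℝ) → Fin m → ℝ :=
  fun x γ =>
    (∑ α, ∑ i, σ x α * ρ x α i * pd (fun x' => η x' γ) x i)
      - (∑ β, ∑ i, η x β * ρ x β i * pd (fun x' => σ x' γ) x i)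
      + ∑ α, ∑ β, C x γ α β * σ x α * η x β

/-- Vertical lift of a section of `E`: the pair `(Z, V) = (0, η ∘ pr)`. -/
noncomputable def vlift (η : (Fin n → ℝ) → Fin m → ℝ) :
    ((Fin n → ℝ) → (Fin m → ℝ) → Fin m → ℝ) × ((Fin n → ℝ) → (Fin m → ℝ) → Fin m → ℝ) :=
  (fun _ _ => 0, fun x _ => η x)

/-- Complete lift of a section of `E`. -/
noncomputable def clift (ρ : (Fin n → ℝ) → Fin m → Fin n → ℝ)
    (C : (Fin n → ℝ) → Fin m → Fin m → Fin m → ℝ)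
    (η : (Fin n → ℝ) → Fin m → ℝ) :
    ((Fin n → ℝ) → (Fin m → ℝ) → Fin m → ℝ) × ((Fin n → ℝ) → (Fin m → ℝ) → Fin m → ℝ) :=
  (fun x _ => η x,
   fun x y α =>
     (∑ i, (∑ β, ρ x β i * y β) * pd (fun x' => η x' α) x i)
       + ∑ β, ∑ γ, C x α β γ * y β * η x γ)


section pdlib
variable {κ : Type*} [Fintype κ] [DecidableEq κ] {f g h : (κ → ℝ) → ℝ} {x : κ → ℝ} {i : κ}

lemma pd_const (c : ℝ) (x : κ → ℝ) (i : κ) : pd (fun _ => c) x i = 0 := by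
  simp [pd]

lemma pd_neg (x : κ → ℝ) (i : κ) : pd (fun x => -f x) x i = - pd f x i := by
  simp [pd, fderiv_neg]

lemma pd_add (hf : DifferentiableAt ℝ f x) (hg : DifferentiableAt ℝ g x) :
    pd (fun x => f x + g x) x i = pd f x i + pd g x i := by
  simp [pd, fderiv_fun_add hf hg]

lemma pd_sub (hf : DifferentiableAt ℝ f x) (hg : DifferentiableAt ℝ g x) :
    pd (fun x => f x - g x) x i = pd f x i - pd g x i := by
  simp [pd, fderiv_fun_sub hf hg]

lemma pd_mul (hf : DifferentiableAt ℝ f x) (hg : DifferentiableAt ℝ g x) :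
    pd (fun x => f x * g x) x i = pd f x i * g x + f x * pd g x i := by
  simp [pd, fderiv_fun_mul hf hg]; ring

lemma pd_mul3 (hf : DifferentiableAt ℝ f x) (hg : DifferentiableAt ℝ g x)
    (hh : DifferentiableAt ℝ h x) :
    pd (fun x => f x * g x * h x) x i
      = pd f x i * g x * h x + f x * pd g x i * h x + f x * g x * pd h x i := by
  rw [pd_mul (hf.fun_mul hg) hh, pd_mul hf hg]; ring

lemma pd_sum {ι : Type*} (s : Finset ι) (F : ι → (κ → ℝ) → ℝ)
    (hF : ∀ j ∈ s, DifferentiableAt ℝ (F j) x) :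
    pd (fun x => ∑ j ∈ s, F j x) x i = ∑ j ∈ s, pd (F j) x i := by
  simp [pd, fderiv_fun_sum hF]

lemma pd_coord (β : κ) (y : κ → ℝ) (α : κ) :
    pd (fun y : κ → ℝ => y β) y α = if β = α then 1 else 0 := by
  have : fderiv ℝ (fun y : κ → ℝ => y β) y = ContinuousLinearMap.proj β :=
    (ContinuousLinearMap.proj β : (κ → ℝ) →L[ℝ] ℝ).fderiv
  simp [pd, this, Pi.single_apply]

omit [DecidableEq κ] in
lemma differentiableAt_of_contDiff (hf : ContDiff ℝ (⊤ : ℕ∞) f) : DifferentiableAt ℝ f x :=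
  (hf.differentiable (by simp)).differentiableAt

lemma contDiff_pd (hf : ContDiff ℝ (⊤ : ℕ∞) f) (i : κ) : ContDiff ℝ (⊤ : ℕ∞) (fun x => pd f x i) :=
  (hf.fderiv_right (le_refl _)).clm_apply contDiff_const

lemma pd_swap (hf : ContDiff ℝ (⊤ : ℕ∞) f) (x : κ → ℝ) (i j : κ) :
    pd (fun x => pd f x j) x i = pd (fun x => pd f x i) x j := by
  have hsym : IsSymmSndFDerivAt ℝ f x := hf.contDiffAt.isSymmSndFDerivAt (by rw [minSmoothness_of_isRCLikeNormedField]; exact WithTop.coe_le_coe.mpr le_top)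
  have hd : DifferentiableAt ℝ (fderiv ℝ f) x :=
    ((hf.fderiv_right (m := (⊤ : ℕ∞)) (le_refl _)).differentiable (by simp)).differentiableAt
  have key : ∀ v w : κ → ℝ,
      fderiv ℝ (fun x => fderiv ℝ f x v) x w = fderiv ℝ (fderiv ℝ f) x w v := by
    intro v w
    rw [fderiv_clm_apply hd (differentiableAt_const v)]
    simp
  simp only [pd]
  rw [key, key]
  exact hsym _ _

lemma pd_lin (a : κ → ℝ) (y : κ → ℝ) (β : κ) :
    pd (fun y' => ∑ γ, a γ * y' γ) y β = a β := by
  rw [pd_sum Finset.univ (fun γ => fun y' => a γ * y' γ)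
    (fun γ _ => (differentiableAt_const _).mul (differentiable_apply γ).differentiableAt)]
  simp only [pd_mul (differentiableAt_const _) (differentiable_apply _).differentiableAt,
    pd_const, pd_coord]
  simp [Finset.sum_ite_eq]

end pdlib

section sumhelpers
variable {A B C D : Type*} [Fintype A] [Fintype B] [Fintype C] [Fintype D]

lemma sum_swap₁ (f : A → B → ℝ) : ∑ a, ∑ b, f a b = ∑ b, ∑ a, f a b := Finset.sum_comm

lemma sum_swap₂ (f : A → B → C → ℝ) :
    ∑ a, ∑ b, ∑ c, f a b c = ∑ a, ∑ c, ∑ b, f a b c :=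
  Finset.sum_congr rfl fun _ _ => Finset.sum_comm

lemma sum_swap₃ (f : A → B → C → D → ℝ) :
    ∑ a, ∑ b, ∑ c, ∑ d, f a b c d = ∑ a, ∑ b, ∑ d, ∑ c, f a b c d :=
  Finset.sum_congr rfl fun _ _ => Finset.sum_congr rfl fun _ _ => Finset.sum_comm

lemma sum4_congr {f g : A → B → C → D → ℝ} (h : ∀ a b c d, f a b c d = g a b c d) :
    ∑ a, ∑ b, ∑ c, ∑ d, f a b c d = ∑ a, ∑ b, ∑ c, ∑ d, g a b c d :=
  Finset.sum_congr rfl fun a _ => Finset.sum_congr rfl fun b _ =>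
    Finset.sum_congr rfl fun c _ => Finset.sum_congr rfl fun d _ => h a b c d

lemma sum3_congr {f g : A → B → C → ℝ} (h : ∀ a b c, f a b c = g a b c) :
    ∑ a, ∑ b, ∑ c, f a b c = ∑ a, ∑ b, ∑ c, g a b c :=
  Finset.sum_congr rfl fun a _ => Finset.sum_congr rfl fun b _ =>
    Finset.sum_congr rfl fun c _ => h a b c

lemma sum2_congr {f g : A → B → ℝ} (h : ∀ a b, f a b = g a b) :
    ∑ a, ∑ b, f a b = ∑ a, ∑ b, g a b :=
  Finset.sum_congr rfl fun a _ => Finset.sum_congr rfl fun b _ => h a b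
end sumhelpers

section analytic
variable {n m : ℕ}
variable (ρ : (Fin n → ℝ) → Fin m → Fin n → ℝ)
variable (C : (Fin n → ℝ) → Fin m → Fin m → Fin m → ℝ)
variable (η σ : (Fin n → ℝ) → Fin m → ℝ)

/-- y-derivative of the V-component of a complete lift -/
lemma cliftV_pd_y (hσ : ∀ a, ContDiff ℝ (⊤ : ℕ∞) (fun x => σ x a))
    (x : Fin n → ℝ) (y : Fin m → ℝ) (α β : Fin m) :
    pd (fun y' => (∑ i, (∑ b, ρ x b i * y' b) * pd (fun x' => σ x' α) x i)
        + ∑ b, ∑ g, C x α b g * y' b * σ x g) y β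
    = (∑ i, ρ x β i * pd (fun x' => σ x' α) x i) + ∑ g, C x α β g * σ x g := by
  have hfun : (fun y' : Fin m → ℝ =>
      (∑ i, (∑ b, ρ x b i * y' b) * pd (fun x' => σ x' α) x i)
        + ∑ b, ∑ g, C x α b g * y' b * σ x g)
      = fun y' => ∑ b, ((∑ i, ρ x b i * pd (fun x' => σ x' α) x i)
          + ∑ g, C x α b g * σ x g) * y' b := by
    funext y'
    simp only [Finset.sum_mul, add_mul, Finset.sum_add_distrib]
    congr 1
    · rw [Finset.sum_comm]
      exact Finset.sum_congr rfl fun i _ => Finset.sum_congr rfl fun b _ => by ring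
    · exact Finset.sum_congr rfl fun b _ => Finset.sum_congr rfl fun g _ => by ring
  rw [hfun, pd_lin]

/-- x-derivative of the V-component of a complete lift -/
lemma cliftV_pd_x (hρ : ∀ b i, ContDiff ℝ (⊤ : ℕ∞) (fun x => ρ x b i))
    (hC : ∀ g a b, ContDiff ℝ (⊤ : ℕ∞) (fun x => C x g a b))
    (hσ : ∀ a, ContDiff ℝ (⊤ : ℕ∞) (fun x => σ x a))
    (x : Fin n → ℝ) (y : Fin m → ℝ) (α : Fin m) (i : Fin n) :
    pd (fun x' => (∑ j, (∑ b, ρ x' b j * y b) * pd (fun x'' => σ x'' α) x' j)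
        + ∑ b, ∑ g, C x' α b g * y b * σ x' g) x i
    = (∑ j, ((∑ b, pd (fun x' => ρ x' b j) x i * y b) * pd (fun x' => σ x' α) x j
          + (∑ b, ρ x b j * y b) * pd (fun x' => pd (fun x'' => σ x'' α) x' j) x i))
      + ∑ b, ∑ g, (pd (fun x' => C x' α b g) x i * y b * σ x g
          + C x α b g * y b * pd (fun x' => σ x' g) x i) := by
  have h1 : ∀ j : Fin n, DifferentiableAt ℝ (fun x' => ∑ b, ρ x' b j * y b) x :=
    fun j => DifferentiableAt.fun_sum fun b _ =>
      (differentiableAt_of_contDiff (hρ b j)).mul_const (y b)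
  have h2 : ∀ j : Fin n, DifferentiableAt ℝ (fun x' => pd (fun x'' => σ x'' α) x' j) x :=
    fun j => differentiableAt_of_contDiff (contDiff_pd (hσ α) j)
  have hA : DifferentiableAt ℝ
      (fun x' => ∑ j, (∑ b, ρ x' b j * y b) * pd (fun x'' => σ x'' α) x' j) x :=
    DifferentiableAt.fun_sum fun j _ => (h1 j).fun_mul (h2 j)
  have hB : DifferentiableAt ℝ
      (fun x' => ∑ b, ∑ g, C x' α b g * y b * σ x' g) x :=
    DifferentiableAt.fun_sum fun b _ => DifferentiableAt.fun_sum fun g _ =>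
      ((differentiableAt_of_contDiff (hC α b g)).mul_const (y b)).fun_mul
        (differentiableAt_of_contDiff (hσ g))
  rw [pd_add hA hB]
  congr 1
  · rw [pd_sum Finset.univ _ (fun j _ => (h1 j).fun_mul (h2 j))]
    refine Finset.sum_congr rfl fun j _ => ?_
    rw [pd_mul (h1 j) (h2 j)]
    congr 1
    rw [pd_sum Finset.univ _
      (fun b _ => (differentiableAt_of_contDiff (hρ b j)).mul_const (y b))]
    refine congrArg (· * _) (Finset.sum_congr rfl fun b _ => ?_)
    rw [pd_mul (differentiableAt_of_contDiff (hρ b j)) (differentiableAt_const (y b))]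
    simp [pd_const]
  · rw [pd_sum Finset.univ _ (fun b _ => DifferentiableAt.fun_sum fun g _ =>
      ((differentiableAt_of_contDiff (hC α b g)).mul_const (y b)).fun_mul
        (differentiableAt_of_contDiff (hσ g)))]
    refine Finset.sum_congr rfl fun b _ => ?_
    rw [pd_sum Finset.univ _ (fun g _ =>
      ((differentiableAt_of_contDiff (hC α b g)).mul_const (y b)).fun_mul
        (differentiableAt_of_contDiff (hσ g)))]
    refine Finset.sum_congr rfl fun g _ => ?_
    rw [pd_mul3 (differentiableAt_of_contDiff (hC α b g)) (differentiableAt_const (y b))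
      (differentiableAt_of_contDiff (hσ g))]
    simp [pd_const]

/-- x-derivative of the bracket of two sections -/
lemma ebr_pd_x (hρ : ∀ b i, ContDiff ℝ (⊤ : ℕ∞) (fun x => ρ x b i))
    (hC : ∀ g a b, ContDiff ℝ (⊤ : ℕ∞) (fun x => C x g a b))
    (hη : ∀ a, ContDiff ℝ (⊤ : ℕ∞) (fun x => η x a))
    (hσ : ∀ a, ContDiff ℝ (⊤ : ℕ∞) (fun x => σ x a))
    (x : Fin n → ℝ) (i : Fin n) (γ : Fin m) :
    pd (fun x' => ebr ρ C η σ x' γ) x i =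
      (∑ a, ∑ j, (pd (fun x' => η x' a) x i * ρ x a j * pd (fun x' => σ x' γ) x j
        + η x a * pd (fun x' => ρ x' a j) x i * pd (fun x' => σ x' γ) x j
        + η x a * ρ x a j * pd (fun x' => pd (fun x'' => σ x'' γ) x' j) x i))
      - (∑ a, ∑ j, (pd (fun x' => σ x' a) x i * ρ x a j * pd (fun x' => η x' γ) x j
        + σ x a * pd (fun x' => ρ x' a j) x i * pd (fun x' => η x' γ) x j
        + σ x a * ρ x a j * pd (fun x' => pd (fun x'' => η x'' γ) x' j) x i))
      + ∑ a, ∑ b, (pd (fun x' => C x' γ a b) x i * η x a * σ x b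
        + C x γ a b * pd (fun x' => η x' a) x i * σ x b
        + C x γ a b * η x a * pd (fun x' => σ x' b) x i) := by
  have dη : ∀ a (x : Fin n → ℝ), DifferentiableAt ℝ (fun x' => η x' a) x :=
    fun a _ => differentiableAt_of_contDiff (hη a)
  have dσ : ∀ a (x : Fin n → ℝ), DifferentiableAt ℝ (fun x' => σ x' a) x :=
    fun a _ => differentiableAt_of_contDiff (hσ a)
  have dρ : ∀ a j (x : Fin n → ℝ), DifferentiableAt ℝ (fun x' => ρ x' a j) x :=
    fun a j _ => differentiableAt_of_contDiff (hρ a j)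
  have dC : ∀ g a b (x : Fin n → ℝ), DifferentiableAt ℝ (fun x' => C x' g a b) x :=
    fun g a b _ => differentiableAt_of_contDiff (hC g a b)
  have dpσ : ∀ j (x : Fin n → ℝ),
      DifferentiableAt ℝ (fun x' => pd (fun x'' => σ x'' γ) x' j) x :=
    fun j _ => differentiableAt_of_contDiff (contDiff_pd (hσ γ) j)
  have dpη : ∀ j (x : Fin n → ℝ),
      DifferentiableAt ℝ (fun x' => pd (fun x'' => η x'' γ) x' j) x :=
    fun j _ => differentiableAt_of_contDiff (contDiff_pd (hη γ) j)
  have dA : DifferentiableAt ℝ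
      (fun x' => ∑ a, ∑ j, η x' a * ρ x' a j * pd (fun x'' => σ x'' γ) x' j) x :=
    .fun_sum fun a _ => .fun_sum fun j _ => ((dη a x).fun_mul (dρ a j x)).fun_mul (dpσ j x)
  have dB : DifferentiableAt ℝ
      (fun x' => ∑ a, ∑ j, σ x' a * ρ x' a j * pd (fun x'' => η x'' γ) x' j) x :=
    .fun_sum fun a _ => .fun_sum fun j _ => ((dσ a x).fun_mul (dρ a j x)).fun_mul (dpη j x)
  have dD : DifferentiableAt ℝ
      (fun x' => ∑ a, ∑ b, C x' γ a b * η x' a * σ x' b) x :=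
    .fun_sum fun a _ => .fun_sum fun b _ => ((dC γ a b x).fun_mul (dη a x)).fun_mul (dσ b x)
  simp only [ebr]
  rw [pd_add (dA.fun_sub dB) dD, pd_sub dA dB]
  congr 1
  · congr 1
    · rw [pd_sum Finset.univ _ (fun a _ => DifferentiableAt.fun_sum fun j _ =>
        ((dη a x).fun_mul (dρ a j x)).fun_mul (dpσ j x))]
      refine Finset.sum_congr rfl fun a _ => ?_
      rw [pd_sum Finset.univ _ (fun j _ => ((dη a x).fun_mul (dρ a j x)).fun_mul (dpσ j x))]
      exact Finset.sum_congr rfl fun j _ => pd_mul3 (dη a x) (dρ a j x) (dpσ j x)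
    · rw [pd_sum Finset.univ _ (fun a _ => DifferentiableAt.fun_sum fun j _ =>
        ((dσ a x).fun_mul (dρ a j x)).fun_mul (dpη j x))]
      refine Finset.sum_congr rfl fun a _ => ?_
      rw [pd_sum Finset.univ _ (fun j _ => ((dσ a x).fun_mul (dρ a j x)).fun_mul (dpη j x))]
      exact Finset.sum_congr rfl fun j _ => pd_mul3 (dσ a x) (dρ a j x) (dpη j x)
  · rw [pd_sum Finset.univ _ (fun a _ => DifferentiableAt.fun_sum fun b _ =>
      ((dC γ a b x).fun_mul (dη a x)).fun_mul (dσ b x))]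
    refine Finset.sum_congr rfl fun a _ => ?_
    rw [pd_sum Finset.univ _ (fun b _ => ((dC γ a b x).fun_mul (dη a x)).fun_mul (dσ b x))]
    exact Finset.sum_congr rfl fun b _ => pd_mul3 (dC γ a b x) (dη a x) (dσ b x)
end analytic

lemma key_alg (n m : ℕ)
    (r : Fin m → Fin n → ℝ) (dr : Fin n → Fin m → Fin n → ℝ)
    (c : Fin m → Fin m → Fin m → ℝ) (dc : Fin n → Fin m → Fin m → Fin m → ℝ)
    (e s : Fin m → ℝ) (de ds : Fin n → Fin m → ℝ)
    (dde dds : Fin n → Fin n → Fin m → ℝ) (y : Fin m → ℝ) (α : Fin m)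
    (hcanti : ∀ g a b, c g a b = - c g b a)
    (hdcanti : ∀ i g a b, dc i g a b = - dc i g b a)
    (h1 : ∀ i a b, (∑ j, r a j * dr j b i) - (∑ j, r b j * dr j a i) = ∑ g, r g i * c g a b)
    (h2 : ∀ ν a b g, (∑ i, r a i * dc i ν b g) + (∑ i, r b i * dc i ν g a)
      + (∑ i, r g i * dc i ν a b) + (∑ μ, c μ b g * c ν a μ)
      + (∑ μ, c μ g a * c ν b μ) + (∑ μ, c μ a b * c ν g μ) = 0)
    (hsde : ∀ i j a, dde i j a = dde j i a)
    (hsds : ∀ i j a, dds i j a = dds j i a) :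
    (∑ i, (∑ b, r b i * e b) *
        ((∑ j, ((∑ b, dr i b j * y b) * ds j α + (∑ b, r b j * y b) * dds i j α))
          + ∑ b, ∑ g, (dc i α b g * y b * s g + c α b g * y b * ds i g)))
      + (∑ b, ((∑ i, (∑ a, r a i * y a) * de i b) + ∑ a, ∑ g, c b a g * y a * e g)
          * ((∑ j, r b j * ds j α) + ∑ g, c α b g * s g))
      - ((∑ i, (∑ b, r b i * s b) *
        ((∑ j, ((∑ b, dr i b j * y b) * de j α + (∑ b, r b j * y b) * dde i j α))
          + ∑ b, ∑ g, (dc i α b g * y b * e g + c α b g * y b * de i g)))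
      + (∑ b, ((∑ i, (∑ a, r a i * y a) * ds i b) + ∑ a, ∑ g, c b a g * y a * s g)
          * ((∑ j, r b j * de j α) + ∑ g, c α b g * e g)))
    = (∑ i, (∑ b, r b i * y b) *
        ((∑ a, ∑ j, (de i a * r a j * ds j α + e a * dr i a j * ds j α + e a * r a j * dds i j α))
          - (∑ a, ∑ j, (ds i a * r a j * de j α + s a * dr i a j * de j α + s a * r a j * dde i j α))
          + ∑ a, ∑ b, (dc i α a b * e a * s b + c α a b * de i a * s b + c α a b * e a * ds i b)))
      + ∑ b, ∑ g, c α b g * y b *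
          ((∑ a, ∑ j, e a * r a j * ds j g) - (∑ a, ∑ j, s a * r a j * de j g)
            + ∑ a, ∑ b, c g a b * e a * s b) := by
  -- auxiliary pointwise consequences of antisymmetry
  have hx1 : ∀ (j : Fin n) (a b : Fin m),
      ∑ g, c g b a * r g j = -∑ g, r g j * c g a b := by
    intro j a b
    rw [← Finset.sum_neg_distrib]
    exact Finset.sum_congr rfl fun g _ => by rw [hcanti g b a]; ring
  -- pairing (a): L5 = R1
  have pa : (∑ b : Fin m, ∑ j : Fin n, ∑ i : Fin n, ∑ a : Fin m,
        r a i * y a * de i b * (r b j * ds j α))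
      = ∑ i : Fin n, ∑ a : Fin m, ∑ j : Fin n, ∑ b : Fin m,
        r b i * y b * (de i a * r a j * ds j α) := by
    rw [sum_swap₂, sum_swap₁]
    exact sum4_congr fun i b j a => by ring
  -- pairing (b): L2 = R3 (Schwarz for σ)
  have pb : (∑ i : Fin n, ∑ j : Fin n, ∑ b : Fin m, ∑ a : Fin m,
        r a i * e a * (r b j * y b * dds i j α))
      = ∑ i : Fin n, ∑ a : Fin m, ∑ j : Fin n, ∑ b : Fin m,
        r b i * y b * (e a * r a j * dds i j α) := by
    rw [sum_swap₁, sum_swap₃, sum_swap₂]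
    exact sum4_congr fun j a i b => by rw [hsds i j α]; ring
  -- pairing (c): L4 = R10
  have pc : (∑ i : Fin n, ∑ b : Fin m, ∑ g : Fin m, ∑ a : Fin m,
        r a i * e a * (c α b g * y b * ds i g))
      = ∑ b : Fin m, ∑ g : Fin m, ∑ a : Fin m, ∑ j : Fin n,
        c α b g * y b * (e a * r a j * ds j g) := by
    rw [sum_swap₁, sum_swap₂, sum_swap₃]
    exact sum4_congr fun b g a i => by ring
  -- pairing (d): L7 = R8
  have pd' : (∑ b : Fin m, ∑ g : Fin m, ∑ i : Fin n, ∑ a : Fin m,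
        r a i * y a * de i b * (c α b g * s g))
      = ∑ i : Fin n, ∑ a : Fin m, ∑ g : Fin m, ∑ b : Fin m,
        r b i * y b * (c α a g * de i a * s g) := by
    rw [sum_swap₂, sum_swap₁]
    exact sum4_congr fun i b g a => by ring
  -- pairing (e): L13 = R4
  have pe : (∑ b : Fin m, ∑ j : Fin n, ∑ i : Fin n, ∑ a : Fin m,
        r a i * y a * ds i b * (r b j * de j α))
      = ∑ i : Fin n, ∑ a : Fin m, ∑ j : Fin n, ∑ b : Fin m,
        r b i * y b * (ds i a * r a j * de j α) := by
    rw [sum_swap₂, sum_swap₁]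
    exact sum4_congr fun i b j a => by ring
  -- pairing (f): L10 = R6 (Schwarz for η)
  have pf : (∑ i : Fin n, ∑ j : Fin n, ∑ b : Fin m, ∑ a : Fin m,
        r a i * s a * (r b j * y b * dde i j α))
      = ∑ i : Fin n, ∑ a : Fin m, ∑ j : Fin n, ∑ b : Fin m,
        r b i * y b * (s a * r a j * dde i j α) := by
    rw [sum_swap₁, sum_swap₃, sum_swap₂]
    exact sum4_congr fun j a i b => by rw [hsde i j α]; ring
  -- pairing (g): L12 = R11
  have pg : (∑ i : Fin n, ∑ b : Fin m, ∑ g : Fin m, ∑ a : Fin m,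
        r a i * s a * (c α b g * y b * de i g))
      = ∑ b : Fin m, ∑ g : Fin m, ∑ a : Fin m, ∑ j : Fin n,
        c α b g * y b * (s a * r a j * de j g) := by
    rw [sum_swap₁, sum_swap₂, sum_swap₃]
    exact sum4_congr fun b g a i => by ring
  -- pairing (h): L15 = -R9
  have ph : (∑ b : Fin m, ∑ g : Fin m, ∑ i : Fin n, ∑ a : Fin m,
        r a i * y a * ds i b * (c α b g * e g))
      = -∑ i : Fin n, ∑ a : Fin m, ∑ g : Fin m, ∑ b : Fin m,
        r b i * y b * (c α a g * e a * ds i g) := by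
    simp only [← Finset.sum_neg_distrib]
    rw [sum_swap₁, sum_swap₂, sum_swap₁]
    exact sum4_congr fun i g b a => by rw [hcanti α b g]; ring
  -- group (i): R2 = L1 + L6
  have pi' : (∑ i : Fin n, ∑ a : Fin m, ∑ j : Fin n, ∑ b : Fin m,
        r b i * y b * (e a * dr i a j * ds j α))
      = (∑ i : Fin n, ∑ j : Fin n, ∑ b : Fin m, ∑ a : Fin m,
          r a i * e a * (dr i b j * y b * ds j α))
        + ∑ b : Fin m, ∑ j : Fin n, ∑ a : Fin m, ∑ g : Fin m,
          c b a g * y a * e g * (r b j * ds j α) := by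
    have c1 : (∑ i : Fin n, ∑ a : Fin m, ∑ j : Fin n, ∑ b : Fin m,
          r b i * y b * (e a * dr i a j * ds j α))
        = ∑ j : Fin n, ∑ a : Fin m, ∑ b : Fin m, ∑ i : Fin n,
          e a * y b * ds j α * (r b i * dr i a j) := by
      rw [sum_swap₁, sum_swap₂, sum_swap₃, sum_swap₁]
      exact sum4_congr fun j a i b => by ring
    have c2 : (∑ i : Fin n, ∑ j : Fin n, ∑ b : Fin m, ∑ a : Fin m,
          r a i * e a * (dr i b j * y b * ds j α))
        = ∑ j : Fin n, ∑ a : Fin m, ∑ b : Fin m, ∑ i : Fin n,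
          e a * y b * ds j α * (r a i * dr i b j) := by
      rw [sum_swap₁, sum_swap₃, sum_swap₂, sum_swap₃]
      exact sum4_congr fun j a b i => by ring
    have c3 : (∑ b : Fin m, ∑ j : Fin n, ∑ a : Fin m, ∑ g : Fin m,
          c b a g * y a * e g * (r b j * ds j α))
        = ∑ j : Fin n, ∑ a : Fin m, ∑ b : Fin m, ∑ g : Fin m,
          e a * y b * ds j α * (c g b a * r g j) := by
      rw [sum_swap₁, sum_swap₃, sum_swap₂, sum_swap₃]
      exact sum4_congr fun j a b g => by ring
    rw [c1, c2, c3]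
    simp only [← Finset.sum_add_distrib]
    refine sum3_congr fun j a b => ?_
    simp only [← Finset.mul_sum]
    linear_combination (-(e a * y b * ds j α)) * h1 j a b
      - (e a * y b * ds j α) * hx1 j a b
  -- group (j): R5 = L9 + L14
  have pj : (∑ i : Fin n, ∑ a : Fin m, ∑ j : Fin n, ∑ b : Fin m,
        r b i * y b * (s a * dr i a j * de j α))
      = (∑ i : Fin n, ∑ j : Fin n, ∑ b : Fin m, ∑ a : Fin m,
          r a i * s a * (dr i b j * y b * de j α))
        + ∑ b : Fin m, ∑ j : Fin n, ∑ a : Fin m, ∑ g : Fin m,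
          c b a g * y a * s g * (r b j * de j α) := by
    have c1 : (∑ i : Fin n, ∑ a : Fin m, ∑ j : Fin n, ∑ b : Fin m,
          r b i * y b * (s a * dr i a j * de j α))
        = ∑ j : Fin n, ∑ a : Fin m, ∑ b : Fin m, ∑ i : Fin n,
          s a * y b * de j α * (r b i * dr i a j) := by
      rw [sum_swap₁, sum_swap₂, sum_swap₃, sum_swap₁]
      exact sum4_congr fun j a i b => by ring
    have c2 : (∑ i : Fin n, ∑ j : Fin n, ∑ b : Fin m, ∑ a : Fin m,
          r a i * s a * (dr i b j * y b * de j α))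
        = ∑ j : Fin n, ∑ a : Fin m, ∑ b : Fin m, ∑ i : Fin n,
          s a * y b * de j α * (r a i * dr i b j) := by
      rw [sum_swap₁, sum_swap₃, sum_swap₂, sum_swap₃]
      exact sum4_congr fun j a b i => by ring
    have c3 : (∑ b : Fin m, ∑ j : Fin n, ∑ a : Fin m, ∑ g : Fin m,
          c b a g * y a * s g * (r b j * de j α))
        = ∑ j : Fin n, ∑ a : Fin m, ∑ b : Fin m, ∑ g : Fin m,
          s a * y b * de j α * (c g b a * r g j) := by
      rw [sum_swap₁, sum_swap₃, sum_swap₂, sum_swap₃]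
      exact sum4_congr fun j a b g => by ring
    rw [c1, c2, c3]
    simp only [← Finset.sum_add_distrib]
    refine sum3_congr fun j a b => ?_
    simp only [← Finset.mul_sum]
    linear_combination (-(s a * y b * de j α)) * h1 j a b
      - (s a * y b * de j α) * hx1 j a b
  -- group (k): L3 + L8 - L11 - L16 = R7 + R12
  have pk : (∑ i : Fin n, ∑ b : Fin m, ∑ g : Fin m, ∑ a : Fin m,
        r a i * e a * (dc i α b g * y b * s g))
      + (∑ b : Fin m, ∑ l : Fin m, ∑ a : Fin m, ∑ g : Fin m,
        c b a g * y a * e g * (c α b l * s l))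
      - (∑ i : Fin n, ∑ b : Fin m, ∑ g : Fin m, ∑ a : Fin m,
        r a i * s a * (dc i α b g * y b * e g))
      - (∑ b : Fin m, ∑ l : Fin m, ∑ a : Fin m, ∑ g : Fin m,
        c b a g * y a * s g * (c α b l * e l))
      = (∑ i : Fin n, ∑ a : Fin m, ∑ g : Fin m, ∑ b : Fin m,
          r b i * y b * (dc i α a g * e a * s g))
        + ∑ b : Fin m, ∑ g : Fin m, ∑ a : Fin m, ∑ l : Fin m,
          c α b g * y b * (c g a l * e a * s l) := by
    have q3 : (∑ i : Fin n, ∑ b : Fin m, ∑ g : Fin m, ∑ a : Fin m,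
          r a i * e a * (dc i α b g * y b * s g))
        = ∑ b : Fin m, ∑ u : Fin m, ∑ v : Fin m, ∑ i : Fin n,
          y b * e u * s v * (r u i * dc i α b v) := by
      rw [sum_swap₃, sum_swap₁, sum_swap₂, sum_swap₃]
      exact sum4_congr fun b u v i => by ring
    have q11 : (∑ i : Fin n, ∑ b : Fin m, ∑ g : Fin m, ∑ a : Fin m,
          r a i * s a * (dc i α b g * y b * e g))
        = ∑ b : Fin m, ∑ u : Fin m, ∑ v : Fin m, ∑ i : Fin n,
          y b * e u * s v * (r v i * dc i α b u) := by
      rw [sum_swap₁, sum_swap₂, sum_swap₃]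
      exact sum4_congr fun b u v i => by ring
    have q8 : (∑ b : Fin m, ∑ l : Fin m, ∑ a : Fin m, ∑ g : Fin m,
          c b a g * y a * e g * (c α b l * s l))
        = ∑ b : Fin m, ∑ u : Fin m, ∑ v : Fin m, ∑ l : Fin m,
          y b * e u * s v * (c l b u * c α l v) := by
      rw [sum_swap₁, sum_swap₂, sum_swap₁, sum_swap₃, sum_swap₂]
      exact sum4_congr fun b u v l => by ring
    have q16 : (∑ b : Fin m, ∑ l : Fin m, ∑ a : Fin m, ∑ g : Fin m,
          c b a g * y a * s g * (c α b l * e l))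
        = ∑ b : Fin m, ∑ u : Fin m, ∑ v : Fin m, ∑ l : Fin m,
          y b * e u * s v * (c l b v * c α l u) := by
      rw [sum_swap₁, sum_swap₂, sum_swap₁, sum_swap₃]
      exact sum4_congr fun b u v l => by ring
    have q7 : (∑ i : Fin n, ∑ a : Fin m, ∑ g : Fin m, ∑ b : Fin m,
          r b i * y b * (dc i α a g * e a * s g))
        = ∑ b : Fin m, ∑ u : Fin m, ∑ v : Fin m, ∑ i : Fin n,
          y b * e u * s v * (r b i * dc i α u v) := by
      rw [sum_swap₃, sum_swap₂, sum_swap₁, sum_swap₂, sum_swap₃]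
      exact sum4_congr fun b u v i => by ring
    have q12 : (∑ b : Fin m, ∑ g : Fin m, ∑ a : Fin m, ∑ l : Fin m,
          c α b g * y b * (c g a l * e a * s l))
        = ∑ b : Fin m, ∑ u : Fin m, ∑ v : Fin m, ∑ g : Fin m,
          y b * e u * s v * (c α b g * c g u v) := by
      rw [sum_swap₂, sum_swap₃]
      exact sum4_congr fun b u v g => by ring
    rw [q3, q11, q8, q16, q7, q12]
    simp only [← Finset.sum_add_distrib, ← Finset.sum_sub_distrib]
    refine sum3_congr fun b u v => ?_
    simp only [← Finset.mul_sum]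
    have d1 : (∑ i, r b i * dc i α v u) = -∑ i, r b i * dc i α u v :=
      by rw [← Finset.sum_neg_distrib]
         exact Finset.sum_congr rfl fun i _ => by rw [hdcanti i α v u]; ring
    have d2 : (∑ i, r v i * dc i α u b) = -∑ i, r v i * dc i α b u :=
      by rw [← Finset.sum_neg_distrib]
         exact Finset.sum_congr rfl fun i _ => by rw [hdcanti i α u b]; ring
    have d3 : (∑ l, c l b v * c α u l) = -∑ l, c l b v * c α l u :=
      by rw [← Finset.sum_neg_distrib]
         exact Finset.sum_congr rfl fun l _ => by rw [hcanti α u l]; ring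
    have d4 : (∑ l, c l v u * c α b l) = -∑ l, c α b l * c l u v :=
      by rw [← Finset.sum_neg_distrib]
         exact Finset.sum_congr rfl fun l _ => by rw [hcanti l v u]; ring
    have d5 : (∑ l, c l u b * c α v l) = ∑ l, c l b u * c α l v :=
      Finset.sum_congr rfl fun l _ => by rw [hcanti l u b, hcanti α v l]; ring
    linear_combination (y b * e u * s v) * (h2 α u b v
      - d1 - d2 - d3 - d4 - d5)
  -- final assembly
  simp only [Finset.sum_mul, Finset.mul_sum, mul_add, add_mul, mul_sub, sub_mul,
    Finset.sum_add_distrib, Finset.sum_sub_distrib]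
  linarith [pa, pb, pc, pd', pe, pf, pg, ph, pi', pj, pk]

theorem lifts_bracket_relations
    (ρ : (Fin n → ℝ) → Fin m → Fin n → ℝ)
    (C : (Fin n → ℝ) → Fin m → Fin m → Fin m → ℝ)
    (hρ : ∀ α i, ContDiff ℝ (⊤ : ℕ∞) (fun x => ρ x α i))
    (hC : ∀ γ α β, ContDiff ℝ (⊤ : ℕ∞) (fun x => C x γ α β))
    (hCanti : ∀ x γ α β, C x γ α β = - C x γ β α)
    (heq1 : ∀ (x : Fin n → ℝ) (i : Fin n) (α β : Fin m),
      (∑ j, ρ x α j * pd (fun y => ρ y β i) x j)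
        - (∑ j, ρ x β j * pd (fun y => ρ y α i) x j)
        = ∑ γ, ρ x γ i * C x γ α β)
    (heq2 : ∀ (x : Fin n → ℝ) (ν α β γ : Fin m),
      (∑ i, ρ x α i * pd (fun y => C y ν β γ) x i)
        + (∑ i, ρ x β i * pd (fun y => C y ν γ α) x i)
        + (∑ i, ρ x γ i * pd (fun y => C y ν α β) x i)
        + (∑ μ, C x μ β γ * C x ν α μ)
        + (∑ μ, C x μ γ α * C x ν β μ)
        + (∑ μ, C x μ α β * C x ν γ μ) = 0)
    (η σ : (Fin n → ℝ) → Fin m → ℝ)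
    (hη : ∀ α, ContDiff ℝ (⊤ : ℕ∞) (fun x => η x α))
    (hσ : ∀ α, ContDiff ℝ (⊤ : ℕ∞) (fun x => σ x α)) :
    -- [η^C, σ^C] = [η,σ]^C
    (∀ (x : Fin n → ℝ) (y : Fin m → ℝ) (α : Fin m),
      brPZ ρ C (clift ρ C η).1 (clift ρ C η).2 (clift ρ C σ).1 (clift ρ C σ).2 x y α
        = (clift ρ C (ebr ρ C η σ)).1 x y α ∧
      brPV ρ (clift ρ C η).1 (clift ρ C η).2 (clift ρ C σ).1 (clift ρ C σ).2 x y α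
        = (clift ρ C (ebr ρ C η σ)).2 x y α) ∧
    -- [η^C, σ^V] = [η,σ]^V
    (∀ (x : Fin n → ℝ) (y : Fin m → ℝ) (α : Fin m),
      brPZ ρ C (clift ρ C η).1 (clift ρ C η).2 (vlift σ).1 (vlift σ).2 x y α
        = (vlift (ebr ρ C η σ)).1 x y α ∧
      brPV ρ (clift ρ C η).1 (clift ρ C η).2 (vlift σ).1 (vlift σ).2 x y α
        = (vlift (ebr ρ C η σ)).2 x y α) ∧
    -- [η^V, σ^V] = 0
    (∀ (x : Fin n → ℝ) (y : Fin m → ℝ) (α : Fin m),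
      brPZ ρ C (vlift η).1 (vlift η).2 (vlift σ).1 (vlift σ).2 x y α = 0 ∧
      brPV ρ (vlift η).1 (vlift η).2 (vlift σ).1 (vlift σ).2 x y α = 0) := by
  classical
  have hdc : ∀ (x : Fin n → ℝ) (i : Fin n) (g a b : Fin m),
      pd (fun x' => C x' g a b) x i = - pd (fun x' => C x' g b a) x i := by
    intro x i g a b
    have hfe : (fun x' => C x' g a b) = fun x' => -C x' g b a :=
      funext fun x' => hCanti x' g a b
    rw [hfe, pd_neg]
  refine ⟨fun x y α => ⟨?_, ?_⟩, fun x y α => ⟨?_, ?_⟩, fun x y α => ⟨?_, ?_⟩⟩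
  · -- [η^C,σ^C] Z-component
    simp only [brPZ, rhoP, clift, ebr, pd_const, mul_zero, Finset.sum_const_zero, add_zero]
    congr 1
    congr 1
    · simp only [Finset.sum_mul]
      rw [Finset.sum_comm]
      exact sum2_congr fun a i => by ring
    · simp only [Finset.sum_mul]
      rw [Finset.sum_comm]
      exact sum2_congr fun a i => by ring
  · -- [η^C,σ^C] V-component
    simp only [brPV, rhoP, clift]
    simp only [cliftV_pd_x ρ C σ hρ hC hσ x y α, cliftV_pd_x ρ C η hρ hC hη x y α,
      cliftV_pd_y ρ C σ hσ x y α, cliftV_pd_y ρ C η hη x y α,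
      ebr_pd_x ρ C η σ hρ hC hη hσ x]
    simp only [ebr]
    exact key_alg n m (fun a i => ρ x a i) (fun i a j => pd (fun x' => ρ x' a j) x i)
      (fun g a b => C x g a b) (fun i g a b => pd (fun x' => C x' g a b) x i)
      (fun a => η x a) (fun a => σ x a)
      (fun i a => pd (fun x' => η x' a) x i) (fun i a => pd (fun x' => σ x' a) x i)
      (fun i j a => pd (fun x' => pd (fun x'' => η x'' a) x' j) x i)
      (fun i j a => pd (fun x' => pd (fun x'' => σ x'' a) x' j) x i)
      y α (fun g a b => hCanti x g a b) (fun i g a b => hdc x i g a b)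
      (fun i a b => heq1 x i a b) (fun ν a b g => heq2 x ν a b g)
      (fun i j a => pd_swap (hη a) x i j) (fun i j a => pd_swap (hσ a) x i j)
  · -- [η^C,σ^V] Z-component
    simp [brPZ, rhoP, clift, vlift, pd_const]
  · -- [η^C,σ^V] V-component
    simp only [brPV, rhoP, clift, vlift, Pi.zero_apply, mul_zero, zero_mul,
      Finset.sum_const_zero, zero_add, add_zero, pd_const]
    simp only [cliftV_pd_y ρ C η hη x y α, ebr]
    have h1' : (∑ i, (∑ a, ρ x a i * η x a) * pd (fun x' => σ x' α) x i)
        = ∑ a, ∑ i, η x a * ρ x a i * pd (fun x' => σ x' α) x i := by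
      simp only [Finset.sum_mul]
      rw [Finset.sum_comm]
      exact sum2_congr fun a i => by ring
    have h2' : (∑ b, σ x b * ((∑ j, ρ x b j * pd (fun x' => η x' α) x j)
          + ∑ g, C x α b g * η x g))
        = (∑ a, ∑ i, σ x a * ρ x a i * pd (fun x' => η x' α) x i)
          + ∑ b, ∑ g, σ x b * (C x α b g * η x g) := by
      simp only [mul_add, Finset.sum_add_distrib, Finset.mul_sum]
      congr 1
      exact sum2_congr fun a i => by ring
    have h3' : (∑ b, ∑ g, σ x b * (C x α b g * η x g))
        = - ∑ a, ∑ b, C x α a b * η x a * σ x b := by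
      rw [sum_swap₁]
      simp only [← Finset.sum_neg_distrib]
      exact sum2_congr fun a b => by rw [hCanti x α b a]; ring
    linarith [h1', h2', h3']
  · -- [η^V,σ^V] Z-component
    simp [brPZ, rhoP, vlift, pd_const]
  · -- [η^V,σ^V] V-component
    simp [brPV, rhoP, vlift, pd_const]
end

section
/- Let Φ: E → E' be a Lie algebroid morphism and L ∈ C∞(E), L' ∈ C∞(E') Lagrangians with L = L' ∘ Φ. Then the prolonged morphism T^Φ Φ: T^E E → T^{E'} E' pulls back the Cartan forms and energies: (T^Φ Φ)*θ_{L'} = θ_L, (T^Φ Φ)*ω_{L'} = ω_L, and E_{L'} ∘ Φ = E_L. -/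
/-!
Pullback of Cartan forms and energies under a morphism of Lie algebroids, in
local coordinates.  `E` is over `Fin n → ℝ` with frame index `Fin m` and
structure functions `ρ, C`; `E'` is over `Fin n' → ℝ` with frame index `Fin m'`
and `ρ', C'`.  A morphism `Φ` is given by the base map `φ` and the matrix
`Φm x α' β = Φ^{α'}_β(x)`, subject to the admissibility equation and the
coordinate morphism equation.  The prolonged map `T^Φ Φ` sends the point `(x,y)`
to `(φ(x), Φm(x)y)` and the fiber element `(b,v)` to `tphiFib`.  For Lagrangians
`L' : E' → ℝ` and `L = L' ∘ Φ`, the theorem asserts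
`(T^Φ Φ)*θ_{L'} = θ_L`, `(T^Φ Φ)*ω_{L'} = ω_L`, `E_{L'} ∘ Φ = E_L`.
-/

open scoped BigOperators

/-- Directional derivative along the anchor of a fiber element `z = (b,v)` of `T^E E`. -/
noncomputable def dirDer {n m : ℕ} (ρ : (Fin n → ℝ) → Fin m → Fin n → ℝ)
    (g : (Fin n → ℝ) → (Fin m → ℝ) → ℝ) (x : Fin n → ℝ) (y : Fin m → ℝ)
    (z : (Fin m → ℝ) × (Fin m → ℝ)) : ℝ :=
  (∑ i, (∑ α, ρ x α i * z.1 α) * pd (fun x' => g x' y) x i)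
    + ∑ α, z.2 α * pd (fun y' => g x y') y α

/-- Pointwise bracket of constant-coefficient frame sections of `T^E E`. -/
noncomputable def cbr {n m : ℕ} (C : (Fin n → ℝ) → Fin m → Fin m → Fin m → ℝ)
    (x : Fin n → ℝ) (z₁ z₂ : (Fin m → ℝ) × (Fin m → ℝ)) :
    (Fin m → ℝ) × (Fin m → ℝ) :=
  (fun γ => ∑ α, ∑ β, C x γ α β * z₁.1 α * z₂.1 β, 0)

/-- Koszul differential of a `1`-form on `T^E E`. -/
noncomputable def d1 {n m : ℕ} (ρ : (Fin n → ℝ) → Fin m → Fin n → ℝ)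
    (C : (Fin n → ℝ) → Fin m → Fin m → Fin m → ℝ)
    (θ : (Fin n → ℝ) → (Fin m → ℝ) → (Fin m → ℝ) × (Fin m → ℝ) → ℝ)
    (x : Fin n → ℝ) (y : Fin m → ℝ) (z₁ z₂ : (Fin m → ℝ) × (Fin m → ℝ)) : ℝ :=
  dirDer ρ (fun x' y' => θ x' y' z₂) x y z₁
    - dirDer ρ (fun x' y' => θ x' y' z₁) x y z₂
    - θ x y (cbr C x z₁ z₂)

/-- The Cartan `1`-section `θ_L = (∂L/∂y^α) 𝒳^α`. -/
noncomputable def thetaL {n m : ℕ} (L : (Fin n → ℝ) → (Fin m → ℝ) → ℝ) :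
    (Fin n → ℝ) → (Fin m → ℝ) → (Fin m → ℝ) × (Fin m → ℝ) → ℝ :=
  fun x y z => ∑ α, pd (fun y' => L x y') y α * z.1 α

/-- The Cartan `2`-section `ω_L = −dθ_L`. -/
noncomputable def omegaL {n m : ℕ} (ρ : (Fin n → ℝ) → Fin m → Fin n → ℝ)
    (C : (Fin n → ℝ) → Fin m → Fin m → Fin m → ℝ)
    (L : (Fin n → ℝ) → (Fin m → ℝ) → ℝ)
    (x : Fin n → ℝ) (y : Fin m → ℝ) (z₁ z₂ : (Fin m → ℝ) × (Fin m → ℝ)) : ℝ :=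
  - d1 ρ C (thetaL L) x y z₁ z₂

/-- The Lagrangian energy `E_L = Δ(L) − L = y^α ∂L/∂y^α − L`. -/
noncomputable def energyL {n m : ℕ} (L : (Fin n → ℝ) → (Fin m → ℝ) → ℝ)
    (x : Fin n → ℝ) (y : Fin m → ℝ) : ℝ :=
  (∑ α, y α * pd (fun y' => L x y') y α) - L x y

/-- Fiber map of `Φ`. -/
noncomputable def phiFib {n m m' : ℕ} (Φm : (Fin n → ℝ) → Fin m' → Fin m → ℝ)
    (x : Fin n → ℝ) (b : Fin m → ℝ) : Fin m' → ℝ :=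
  fun α' => ∑ β, Φm x α' β * b β

/-- Fiber map of the prolonged morphism `T^Φ Φ : T^E E → T^{E'} E'` at `(x,y)`. -/
noncomputable def tphiFib {n m m' : ℕ} (ρ : (Fin n → ℝ) → Fin m → Fin n → ℝ)
    (Φm : (Fin n → ℝ) → Fin m' → Fin m → ℝ)
    (x : Fin n → ℝ) (y : Fin m → ℝ) (z : (Fin m → ℝ) × (Fin m → ℝ)) :
    (Fin m' → ℝ) × (Fin m' → ℝ) :=
  (phiFib Φm x z.1,
   fun α' =>
     (∑ i, pd (fun x' => ∑ β, Φm x' α' β * y β) x i * (∑ γ, ρ x γ i * z.1 γ))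
       + ∑ β, Φm x α' β * z.2 β)

lemma pd_of_hasFDerivAt {κ : Type*} [Fintype κ] [DecidableEq κ]
    {f : (κ → ℝ) → ℝ} {ℓ : (κ → ℝ) →L[ℝ] ℝ} {x : κ → ℝ}
    (h : HasFDerivAt f ℓ x) (i : κ) : pd f x i = ℓ (Pi.single i 1) := by
  rw [pd, h.fderiv]

lemma clm_eq_sum {κ : Type*} [Fintype κ] [DecidableEq κ]
    (ℓ : (κ → ℝ) →L[ℝ] ℝ) (v : κ → ℝ) : ℓ v = ∑ i, v i * ℓ (Pi.single i 1) := by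
  have hv : v = ∑ i, v i • (Pi.single i (1:ℝ) : κ → ℝ) := by
    funext j
    simp [Finset.sum_apply, Pi.single_apply, mul_comm]
  conv_lhs => rw [hv]
  rw [map_sum]
  simp [smul_eq_mul]

section
variable {n' m' : ℕ}

lemma clm_snd_eq_sum (ℓ : ((Fin n' → ℝ) × (Fin m' → ℝ)) →L[ℝ] ℝ) (v : Fin m' → ℝ) :
    ℓ (0, v) = ∑ α', v α' * ℓ (0, Pi.single α' 1) := by
  have h := clm_eq_sum (ℓ.comp (ContinuousLinearMap.inr ℝ (Fin n' → ℝ) (Fin m' → ℝ))) v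
  simpa using h

lemma clm_fst_eq_sum (ℓ : ((Fin n' → ℝ) × (Fin m' → ℝ)) →L[ℝ] ℝ) (w : Fin n' → ℝ) :
    ℓ (w, 0) = ∑ k, w k * ℓ (Pi.single k 1, 0) := by
  have h := clm_eq_sum (ℓ.comp (ContinuousLinearMap.inl ℝ (Fin n' → ℝ) (Fin m' → ℝ))) w
  simpa using h

lemma clm_prod_eq_sum (ℓ : ((Fin n' → ℝ) × (Fin m' → ℝ)) →L[ℝ] ℝ)
    (w : Fin n' → ℝ) (v : Fin m' → ℝ) :
    ℓ (w, v) = (∑ k, w k * ℓ (Pi.single k 1, 0)) + ∑ α', v α' * ℓ (0, Pi.single α' 1) := by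
  have : ((w, v) : (Fin n' → ℝ) × (Fin m' → ℝ)) = (w, 0) + (0, v) := by
    ext <;> simp
  rw [this, map_add, clm_fst_eq_sum, clm_snd_eq_sum]

end

section
variable {n' m' : ℕ} (L' : (Fin n' → ℝ) → (Fin m' → ℝ) → ℝ)

noncomputable def DG : ((Fin n' → ℝ) × (Fin m' → ℝ)) →
    (((Fin n' → ℝ) × (Fin m' → ℝ)) →L[ℝ] ℝ) :=
  fderiv ℝ (fun q : (Fin n' → ℝ) × (Fin m' → ℝ) => L' q.1 q.2)

noncomputable def HG : ((Fin n' → ℝ) × (Fin m' → ℝ)) →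
    (((Fin n' → ℝ) × (Fin m' → ℝ)) →L[ℝ] (((Fin n' → ℝ) × (Fin m' → ℝ)) →L[ℝ] ℝ)) :=
  fderiv ℝ (DG L')

variable (hL' : ContDiff ℝ (⊤ : ℕ∞) (fun q : (Fin n' → ℝ) × (Fin m' → ℝ) => L' q.1 q.2))

include hL'

lemma pd_snd (x' : Fin n' → ℝ) (y' : Fin m' → ℝ) (α' : Fin m') :
    pd (fun t => L' x' t) y' α' = DG L' (x', y') (0, Pi.single α' 1) := by
  have h1 : HasFDerivAt (fun q : (Fin n' → ℝ) × (Fin m' → ℝ) => L' q.1 q.2)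
      (DG L' (x', y')) (x', y') := (hL'.differentiable (by simp) (x', y')).hasFDerivAt
  have h2 : HasFDerivAt (fun t : Fin m' → ℝ => ((x', t) : (Fin n' → ℝ) × (Fin m' → ℝ)))
      ((0 : (Fin m' → ℝ) →L[ℝ] (Fin n' → ℝ)).prod (ContinuousLinearMap.id ℝ _)) y' :=
    (hasFDerivAt_const x' y').prodMk (hasFDerivAt_id y')
  have h3 : HasFDerivAt (fun t => L' x' t)
      ((DG L' (x', y')).comp
        ((0 : (Fin m' → ℝ) →L[ℝ] (Fin n' → ℝ)).prod (ContinuousLinearMap.id ℝ _))) y' :=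
    h1.comp y' h2
  rw [pd_of_hasFDerivAt h3]
  simp

lemma pd_fst (x' : Fin n' → ℝ) (y' : Fin m' → ℝ) (k : Fin n') :
    pd (fun t => L' t y') x' k = DG L' (x', y') (Pi.single k 1, 0) := by
  have h1 : HasFDerivAt (fun q : (Fin n' → ℝ) × (Fin m' → ℝ) => L' q.1 q.2)
      (DG L' (x', y')) (x', y') := (hL'.differentiable (by simp) (x', y')).hasFDerivAt
  have h2 : HasFDerivAt (fun t : Fin n' → ℝ => ((t, y') : (Fin n' → ℝ) × (Fin m' → ℝ)))
      ((ContinuousLinearMap.id ℝ _).prod (0 : (Fin n' → ℝ) →L[ℝ] (Fin m' → ℝ))) x' :=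
    (hasFDerivAt_id x').prodMk (hasFDerivAt_const y' x')
  have h3 : HasFDerivAt (fun t => L' t y')
      ((DG L' (x', y')).comp
        ((ContinuousLinearMap.id ℝ _).prod (0 : (Fin n' → ℝ) →L[ℝ] (Fin m' → ℝ)))) x' :=
    HasFDerivAt.comp (g := fun q : (Fin n' → ℝ) × (Fin m' → ℝ) => L' q.1 q.2) x' h1 h2
  rw [pd_of_hasFDerivAt h3]
  simp

lemma hasFDerivAt_DG_comp {κ : Type*} [Fintype κ] [DecidableEq κ]
    {ψ : (κ → ℝ) → (Fin n' → ℝ) × (Fin m' → ℝ)}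
    {Dψ : (κ → ℝ) →L[ℝ] (Fin n' → ℝ) × (Fin m' → ℝ)}
    {x : κ → ℝ} (hψ : HasFDerivAt ψ Dψ x) (u : (Fin n' → ℝ) × (Fin m' → ℝ)) :
    HasFDerivAt (fun x0 => DG L' (ψ x0) u)
      ((ContinuousLinearMap.apply ℝ ℝ u).comp ((HG L' (ψ x)).comp Dψ)) x := by
  have hDG : ContDiff ℝ (⊤ : ℕ∞) (DG L') := hL'.fderiv_right (by simp)
  have h1 : HasFDerivAt (DG L') (HG L' (ψ x)) (ψ x) :=
    (hDG.differentiable (by simp) (ψ x)).hasFDerivAt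
  exact (ContinuousLinearMap.apply ℝ ℝ u).hasFDerivAt.comp x (h1.comp x hψ)

/-- Lemma A: chain rule for the fiber derivative through a linear fiber map. -/
lemma pd_comp_lin {m : ℕ} (x' : Fin n' → ℝ) (M : Fin m' → Fin m → ℝ)
    (y : Fin m → ℝ) (α : Fin m) :
    pd (fun y0 => L' x' (fun α' => ∑ β, M α' β * y0 β)) y α
      = ∑ α', M α' α * DG L' (x', fun α' => ∑ β, M α' β * y β) (0, Pi.single α' 1) := by
  set p : (Fin n' → ℝ) × (Fin m' → ℝ) := (x', fun α' => ∑ β, M α' β * y β) with hp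
  have h1 : HasFDerivAt (fun q : (Fin n' → ℝ) × (Fin m' → ℝ) => L' q.1 q.2)
      (DG L' p) p := (hL'.differentiable (by simp) p).hasFDerivAt
  have h2 : HasFDerivAt
      (fun y0 : Fin m → ℝ => ((x', fun α' => ∑ β, M α' β * y0 β) :
        (Fin n' → ℝ) × (Fin m' → ℝ)))
      ((0 : (Fin m → ℝ) →L[ℝ] (Fin n' → ℝ)).prod
        (ContinuousLinearMap.pi fun α' => ∑ β, M α' β • ContinuousLinearMap.proj β)) y := by
    refine (hasFDerivAt_const x' y).prodMk (hasFDerivAt_pi.2 fun α' => ?_)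
    exact HasFDerivAt.fun_sum fun β _ =>
      ((ContinuousLinearMap.proj β : (Fin m → ℝ) →L[ℝ] ℝ).hasFDerivAt).const_mul (M α' β)
  have h3 : HasFDerivAt (fun y0 => L' x' (fun α' => ∑ β, M α' β * y0 β))
      ((DG L' p).comp
        ((0 : (Fin m → ℝ) →L[ℝ] (Fin n' → ℝ)).prod
          (ContinuousLinearMap.pi fun α' => ∑ β, M α' β • ContinuousLinearMap.proj β))) y :=
    HasFDerivAt.comp (g := fun q : (Fin n' → ℝ) × (Fin m' → ℝ) => L' q.1 q.2) y h1 h2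
  rw [pd_of_hasFDerivAt h3]
  have h4 : ((0 : (Fin m → ℝ) →L[ℝ] (Fin n' → ℝ)).prod
      (ContinuousLinearMap.pi fun α' => ∑ β, M α' β • ContinuousLinearMap.proj β))
        (Pi.single α (1:ℝ)) = (0, fun α' => M α' α) := by
    ext
    · simp
    · simp [ContinuousLinearMap.sum_apply, Pi.single_apply, mul_ite]
  simp only [ContinuousLinearMap.comp_apply, h4]
  rw [clm_snd_eq_sum]

end


section sumhelpers
open Finset

lemma swap_mul {ι κ : Type*} [Fintype ι] [Fintype κ] (a : ι → ℝ) (F : ι → κ → ℝ) :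
    ∑ i, a i * ∑ j, F i j = ∑ j, ∑ i, a i * F i j := by
  simp only [Finset.mul_sum]
  exact Finset.sum_comm

lemma regroup2 {ι κ : Type*} [Fintype ι] [Fintype κ] (a : ι → ℝ) (Pv : κ → ℝ)
    (H : ι → κ → ℝ) :
    ∑ i, a i * ∑ j, H i j * Pv j = ∑ j, (∑ i, a i * H i j) * Pv j := by
  rw [swap_mul]
  refine Finset.sum_congr rfl fun j _ => ?_
  rw [Finset.sum_mul]
  exact Finset.sum_congr rfl fun i _ => by ring

lemma regroup1 {ι κ : Type*} [Fintype ι] [Fintype κ] (a : ι → ℝ) (Pv Qv : κ → ℝ)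
    (H : ι → κ → ℝ) (S : ι → κ → ℝ) :
    ∑ i, a i * ∑ j, (H i j * Pv j + Qv j * S i j)
      = (∑ j, (∑ i, a i * H i j) * Pv j) + ∑ j, Qv j * ∑ i, a i * S i j := by
  rw [swap_mul, ← Finset.sum_add_distrib]
  refine Finset.sum_congr rfl fun j _ => ?_
  rw [Finset.sum_mul, Finset.mul_sum, ← Finset.sum_add_distrib]
  refine Finset.sum_congr rfl fun i _ => by ring

lemma piece1 {n m : ℕ} (z1 z2 : Fin m → ℝ) (u w : Fin m → Fin n → ℝ) :
    ∑ μ, ∑ ν, z1 μ * z2 ν * ∑ i, u μ i * w ν i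
      = ∑ i, (∑ μ, u μ i * z1 μ) * (∑ ν, z2 ν * w ν i) := by
  calc ∑ μ, ∑ ν, z1 μ * z2 ν * ∑ i, u μ i * w ν i
      = ∑ μ, ∑ ν, ∑ i, (u μ i * z1 μ) * (z2 ν * w ν i) := by
        refine Finset.sum_congr rfl fun μ _ => Finset.sum_congr rfl fun ν _ => ?_
        rw [Finset.mul_sum]
        exact Finset.sum_congr rfl fun i _ => by ring
    _ = ∑ μ, ∑ i, ∑ ν, (u μ i * z1 μ) * (z2 ν * w ν i) :=
        Finset.sum_congr rfl fun μ _ => Finset.sum_comm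
    _ = ∑ i, ∑ μ, ∑ ν, (u μ i * z1 μ) * (z2 ν * w ν i) := Finset.sum_comm
    _ = ∑ i, (∑ μ, u μ i * z1 μ) * (∑ ν, z2 ν * w ν i) := by
        refine Finset.sum_congr rfl fun i _ => ?_
        rw [Finset.sum_mul_sum]
lemma piece3 {m m' : ℕ} (z1 z2 : Fin m → ℝ) (Cc : Fin m' → Fin m' → ℝ)
    (Φ : Fin m' → Fin m → ℝ) :
    ∑ μ, ∑ ν, z1 μ * z2 ν * ∑ β', ∑ γ', Cc β' γ' * Φ β' μ * Φ γ' ν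
      = ∑ β', ∑ γ', (Cc β' γ' * ∑ β, Φ β' β * z1 β) * ∑ β, Φ γ' β * z2 β := by
  calc ∑ μ, ∑ ν, z1 μ * z2 ν * ∑ β', ∑ γ', Cc β' γ' * Φ β' μ * Φ γ' ν
      = ∑ μ, ∑ ν, ∑ β', ∑ γ', (Cc β' γ' * Φ β' μ * z1 μ) * (Φ γ' ν * z2 ν) := by
        refine Finset.sum_congr rfl fun μ _ => Finset.sum_congr rfl fun ν _ => ?_
        rw [Finset.mul_sum]
        refine Finset.sum_congr rfl fun β' _ => ?_
        rw [Finset.mul_sum]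
        exact Finset.sum_congr rfl fun γ' _ => by ring
    _ = ∑ μ, ∑ β', ∑ ν, ∑ γ', (Cc β' γ' * Φ β' μ * z1 μ) * (Φ γ' ν * z2 ν) :=
        Finset.sum_congr rfl fun μ _ => Finset.sum_comm
    _ = ∑ β', ∑ μ, ∑ ν, ∑ γ', (Cc β' γ' * Φ β' μ * z1 μ) * (Φ γ' ν * z2 ν) :=
        Finset.sum_comm
    _ = ∑ β', ∑ μ, ∑ γ', ∑ ν, (Cc β' γ' * Φ β' μ * z1 μ) * (Φ γ' ν * z2 ν) :=
        Finset.sum_congr rfl fun β' _ => Finset.sum_congr rfl fun μ _ => Finset.sum_comm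
    _ = ∑ β', ∑ γ', ∑ μ, ∑ ν, (Cc β' γ' * Φ β' μ * z1 μ) * (Φ γ' ν * z2 ν) :=
        Finset.sum_congr rfl fun β' _ => Finset.sum_comm
    _ = ∑ β', ∑ γ', (Cc β' γ' * ∑ β, Φ β' β * z1 β) * ∑ β, Φ γ' β * z2 β := by
        refine Finset.sum_congr rfl fun β' _ => Finset.sum_congr rfl fun γ' _ => ?_
        rw [mul_assoc, Finset.sum_mul_sum, Finset.mul_sum]
        refine Finset.sum_congr rfl fun μ _ => ?_
        rw [Finset.mul_sum]
        exact Finset.sum_congr rfl fun ν _ => by ring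

lemma piece4 {m : ℕ} (z1 z2 : Fin m → ℝ) (Φr : Fin m → ℝ)
    (Cx : Fin m → Fin m → Fin m → ℝ) :
    ∑ μ, ∑ ν, z1 μ * z2 ν * ∑ γ, Φr γ * Cx γ μ ν
      = ∑ γ, Φr γ * ∑ μ, ∑ ν, Cx γ μ ν * z1 μ * z2 ν := by
  calc ∑ μ, ∑ ν, z1 μ * z2 ν * ∑ γ, Φr γ * Cx γ μ ν
      = ∑ μ, ∑ ν, ∑ γ, Φr γ * (Cx γ μ ν * z1 μ * z2 ν) := by
        refine Finset.sum_congr rfl fun μ _ => Finset.sum_congr rfl fun ν _ => ?_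
        rw [Finset.mul_sum]
        exact Finset.sum_congr rfl fun γ _ => by ring
    _ = ∑ μ, ∑ γ, ∑ ν, Φr γ * (Cx γ μ ν * z1 μ * z2 ν) :=
        Finset.sum_congr rfl fun μ _ => Finset.sum_comm
    _ = ∑ γ, ∑ μ, ∑ ν, Φr γ * (Cx γ μ ν * z1 μ * z2 ν) := Finset.sum_comm
    _ = ∑ γ, Φr γ * ∑ μ, ∑ ν, Cx γ μ ν * z1 μ * z2 ν := by
        refine Finset.sum_congr rfl fun γ _ => ?_
        rw [Finset.mul_sum]
        refine Finset.sum_congr rfl fun μ _ => ?_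
        rw [Finset.mul_sum]

end sumhelpers

lemma phiFib_eq {n m m' : ℕ} (Φm : (Fin n → ℝ) → Fin m' → Fin m → ℝ)
    (x : Fin n → ℝ) (b : Fin m → ℝ) :
    phiFib Φm x b = fun α' => ∑ β, Φm x α' β * b β := rfl

set_option maxHeartbeats 2000000 in
theorem morphism_pullback_cartan_forms {n m n' m' : ℕ}
    (ρ : (Fin n → ℝ) → Fin m → Fin n → ℝ)
    (C : (Fin n → ℝ) → Fin m → Fin m → Fin m → ℝ)
    (ρ' : (Fin n' → ℝ) → Fin m' → Fin n' → ℝ)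
    (C' : (Fin n' → ℝ) → Fin m' → Fin m' → Fin m' → ℝ)
    (φ : (Fin n → ℝ) → Fin n' → ℝ)
    (Φm : (Fin n → ℝ) → Fin m' → Fin m → ℝ)
    (L' : (Fin n' → ℝ) → (Fin m' → ℝ) → ℝ)
    (hρ : ∀ α i, ContDiff ℝ (⊤ : ℕ∞) (fun x => ρ x α i))
    (hρ' : ∀ α' k, ContDiff ℝ (⊤ : ℕ∞) (fun x' => ρ' x' α' k))
    (hC : ∀ γ α β, ContDiff ℝ (⊤ : ℕ∞) (fun x => C x γ α β))
    (hC' : ∀ γ' α' β', ContDiff ℝ (⊤ : ℕ∞) (fun x' => C' x' γ' α' β'))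
    (hφ : ContDiff ℝ (⊤ : ℕ∞) φ)
    (hΦm : ∀ α' β, ContDiff ℝ (⊤ : ℕ∞) (fun x => Φm x α' β))
    (hL' : ContDiff ℝ (⊤ : ℕ∞) (fun p : (Fin n' → ℝ) × (Fin m' → ℝ) => L' p.1 p.2))
    -- Φ is admissible
    (hadm : ∀ (x : Fin n → ℝ) (α : Fin m) (k : Fin n'),
      ∑ i, ρ x α i * pd (fun x' => φ x' k) x i = ∑ β', ρ' (φ x) β' k * Φm x β' α)
    -- Φ is a morphism of Lie algebroids
    (hmorph : ∀ (x : Fin n → ℝ) (α' : Fin m') (μ ν : Fin m),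
      (∑ i, ρ x μ i * pd (fun x' => Φm x' α' ν) x i)
        - (∑ i, ρ x ν i * pd (fun x' => Φm x' α' μ) x i)
        + (∑ β', ∑ γ', C' (φ x) α' β' γ' * Φm x β' μ * Φm x γ' ν)
        = ∑ γ, Φm x α' γ * C x γ μ ν) :
    -- (T^Φ Φ)* θ_{L'} = θ_L
    (∀ (x : Fin n → ℝ) (y : Fin m → ℝ) (z : (Fin m → ℝ) × (Fin m → ℝ)),
      thetaL (fun x'' y'' => L' (φ x'') (phiFib Φm x'' y'')) x y z
        = thetaL L' (φ x) (phiFib Φm x y) (tphiFib ρ Φm x y z)) ∧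
    -- (T^Φ Φ)* ω_{L'} = ω_L
    (∀ (x : Fin n → ℝ) (y : Fin m → ℝ) (z₁ z₂ : (Fin m → ℝ) × (Fin m → ℝ)),
      omegaL ρ C (fun x'' y'' => L' (φ x'') (phiFib Φm x'' y'')) x y z₁ z₂
        = omegaL ρ' C' L' (φ x) (phiFib Φm x y)
            (tphiFib ρ Φm x y z₁) (tphiFib ρ Φm x y z₂)) ∧
    -- E_{L'} ∘ Φ = E_L
    (∀ (x : Fin n → ℝ) (y : Fin m → ℝ),
      energyL (fun x'' y'' => L' (φ x'') (phiFib Φm x'' y'')) x y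
        = energyL L' (φ x) (phiFib Φm x y)) := by
  -- θ_L rewritten through DG
  have hθL : ∀ (x0 : Fin n → ℝ) (y0 : Fin m → ℝ) (z : (Fin m → ℝ) × (Fin m → ℝ)),
      thetaL (fun x'' y'' => L' (φ x'') (phiFib Φm x'' y'')) x0 y0 z
        = ∑ α', DG L' (φ x0, fun α'' => ∑ β, Φm x0 α'' β * y0 β) (0, Pi.single α' 1)
            * (∑ β, Φm x0 α' β * z.1 β) := by
    intro x0 y0 z
    simp only [thetaL, phiFib_eq]
    simp only [pd_comp_lin L' hL']
    simp only [Finset.sum_mul, Finset.mul_sum]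
    rw [Finset.sum_comm]
    exact Finset.sum_congr rfl fun α' _ => Finset.sum_congr rfl fun α _ => by ring
  have hθ' : ∀ (x'' : Fin n' → ℝ) (y'' : Fin m' → ℝ)
      (z' : (Fin m' → ℝ) × (Fin m' → ℝ)),
      thetaL L' x'' y'' z'
        = ∑ α', DG L' (x'', y'') (0, Pi.single α' 1) * z'.1 α' := by
    intro x'' y'' z'
    simp only [thetaL]
    simp only [pd_snd L' hL']
  refine ⟨?_, ?_, ?_⟩
  · -- θ pullback
    intro x y z
    rw [hθL]
    simp only [thetaL, tphiFib, phiFib_eq]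
    simp only [pd_snd L' hL']
  · -- ω pullback
    intro x y z₁ z₂
    -- derivative helpers at x
    have hΦ' : ∀ (α' : Fin m') (β : Fin m), HasFDerivAt (fun x1 => Φm x1 α' β)
        (fderiv ℝ (fun x1 => Φm x1 α' β) x) x :=
      fun α' β => ((hΦm α' β).differentiable (by simp) x).hasFDerivAt
    have hφ' : ∀ k, HasFDerivAt (fun x1 => φ x1 k)
        (fderiv ℝ (fun x1 => φ x1 k) x) x :=
      fun k => (((contDiff_pi.1 hφ) k).differentiable (by simp) x).hasFDerivAt
    set pt : (Fin n' → ℝ) × (Fin m' → ℝ) :=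
      (φ x, fun α'' => ∑ β, Φm x α'' β * y β) with hpt
    set Dψ : (Fin n → ℝ) →L[ℝ] ((Fin n' → ℝ) × (Fin m' → ℝ)) :=
      (ContinuousLinearMap.pi fun k => fderiv ℝ (fun x1 => φ x1 k) x).prod
        (ContinuousLinearMap.pi fun β' => ∑ β, y β • fderiv ℝ (fun x1 => Φm x1 β' β) x)
      with hDψdef
    have hψ : HasFDerivAt
        (fun x0 => ((φ x0, fun β' => ∑ β, Φm x0 β' β * y β) :
          (Fin n' → ℝ) × (Fin m' → ℝ))) Dψ x := by
      refine HasFDerivAt.prodMk (hasFDerivAt_pi.2 fun k => hφ' k)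
        (hasFDerivAt_pi.2 fun β' => HasFDerivAt.fun_sum fun β _ => (hΦ' β' β).mul_const (y β))
    have hDψ : ∀ i, Dψ (Pi.single i 1) =
        ((fun k => pd (fun x1 => φ x1 k) x i,
          fun β' => ∑ β, y β * pd (fun x1 => Φm x1 β' β) x i) :
          (Fin n' → ℝ) × (Fin m' → ℝ)) := by
      intro i
      refine Prod.ext ?_ ?_ <;> funext j <;>
        simp [hDψdef, pd, ContinuousLinearMap.pi_apply, ContinuousLinearMap.sum_apply]
    have h_pdΦy : ∀ (β' : Fin m') i, pd (fun x' => ∑ β, Φm x' β' β * y β) x i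
        = ∑ β, y β * pd (fun x1 => Φm x1 β' β) x i := by
      intro β' i
      rw [pd_of_hasFDerivAt (HasFDerivAt.fun_sum fun β _ => (hΦ' β' β).mul_const (y β))]
      simp [pd]
    -- pd of θ_L in base directions
    have hpdθx : ∀ (z : (Fin m → ℝ) × (Fin m → ℝ)) (i : Fin n),
        pd (fun x0 => thetaL (fun x'' y'' => L' (φ x'') (phiFib Φm x'' y'')) x0 y z) x i
        = ∑ α', (HG L' pt (Dψ (Pi.single i 1)) (0, Pi.single α' 1)
              * (∑ β, Φm x α' β * z.1 β)
            + DG L' pt (0, Pi.single α' 1)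
              * (∑ β, z.1 β * pd (fun x1 => Φm x1 α' β) x i)) := by
      intro z i
      simp only [hθL]
      have hg : ∀ α', HasFDerivAt (fun x0 => ∑ β, Φm x0 α' β * z.1 β)
          (∑ β, z.1 β • fderiv ℝ (fun x1 => Φm x1 α' β) x) x :=
        fun α' => HasFDerivAt.fun_sum fun β _ => (hΦ' α' β).mul_const (z.1 β)
      have hD : ∀ (u : (Fin n' → ℝ) × (Fin m' → ℝ)), HasFDerivAt
          (fun x0 => DG L' ((φ x0, fun β' => ∑ β, Φm x0 β' β * y β) :
            (Fin n' → ℝ) × (Fin m' → ℝ)) u)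
          ((ContinuousLinearMap.apply ℝ ℝ u).comp ((HG L' pt).comp Dψ)) x :=
        fun u => hasFDerivAt_DG_comp L' hL' hψ u
      have hsum : HasFDerivAt
          (fun x0 => ∑ α', DG L' ((φ x0, fun β' => ∑ β, Φm x0 β' β * y β) :
              (Fin n' → ℝ) × (Fin m' → ℝ)) (0, Pi.single α' 1)
            * (∑ β, Φm x0 α' β * z.1 β))
          (∑ α', (DG L' pt (0, Pi.single α' 1)
              • (∑ β, z.1 β • fderiv ℝ (fun x1 => Φm x1 α' β) x)
            + (∑ β, Φm x α' β * z.1 β)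
              • ((ContinuousLinearMap.apply ℝ ℝ ((0, Pi.single α' 1) :
                  (Fin n' → ℝ) × (Fin m' → ℝ))).comp ((HG L' pt).comp Dψ)))) x :=
        HasFDerivAt.fun_sum fun α' _ => (hD _).mul (hg α')
      rw [pd_of_hasFDerivAt hsum i]
      simp only [ContinuousLinearMap.sum_apply, ContinuousLinearMap.add_apply,
        ContinuousLinearMap.smul_apply, ContinuousLinearMap.comp_apply,
        ContinuousLinearMap.apply_apply, smul_eq_mul]
      refine Finset.sum_congr rfl fun α' _ => ?_
      simp only [pd]
      ring
    have hpdθy : ∀ (z : (Fin m → ℝ) × (Fin m → ℝ)) (α : Fin m),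
        pd (fun y0 => thetaL (fun x'' y'' => L' (φ x'') (phiFib Φm x'' y'')) x y0 z) y α
        = ∑ α', HG L' pt ((0, fun β' => Φm x β' α) : (Fin n' → ℝ) × (Fin m' → ℝ))
            (0, Pi.single α' 1) * (∑ β, Φm x α' β * z.1 β) := by
      intro z α
      simp only [hθL]
      have hψ2 : HasFDerivAt
          (fun y0 : Fin m → ℝ => ((φ x, fun β' => ∑ β, Φm x β' β * y0 β) :
            (Fin n' → ℝ) × (Fin m' → ℝ)))
          ((0 : (Fin m → ℝ) →L[ℝ] (Fin n' → ℝ)).prod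
            (ContinuousLinearMap.pi fun β' => ∑ β, Φm x β' β • ContinuousLinearMap.proj β)) y := by
        refine (hasFDerivAt_const (φ x) y).prodMk (hasFDerivAt_pi.2 fun β' => ?_)
        exact HasFDerivAt.fun_sum fun β _ =>
          ((ContinuousLinearMap.proj β : (Fin m → ℝ) →L[ℝ] ℝ).hasFDerivAt).const_mul (Φm x β' β)
      have hsum : HasFDerivAt
          (fun y0 => ∑ α', DG L' ((φ x, fun β' => ∑ β, Φm x β' β * y0 β) :
              (Fin n' → ℝ) × (Fin m' → ℝ)) (0, Pi.single α' 1)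
            * (∑ β, Φm x α' β * z.1 β))
          (∑ α', (∑ β, Φm x α' β * z.1 β)
            • ((ContinuousLinearMap.apply ℝ ℝ ((0, Pi.single α' 1) :
                (Fin n' → ℝ) × (Fin m' → ℝ))).comp ((HG L' pt).comp
              ((0 : (Fin m → ℝ) →L[ℝ] (Fin n' → ℝ)).prod
                (ContinuousLinearMap.pi fun β' => ∑ β, Φm x β' β • ContinuousLinearMap.proj β))))) y := by
        refine HasFDerivAt.fun_sum fun α' _ => ?_
        have := (hasFDerivAt_DG_comp L' hL' hψ2 ((0, Pi.single α' 1) :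
          (Fin n' → ℝ) × (Fin m' → ℝ))).mul_const (∑ β, Φm x α' β * z.1 β)
        exact this
      rw [pd_of_hasFDerivAt hsum α]
      simp only [ContinuousLinearMap.sum_apply, ContinuousLinearMap.smul_apply,
        ContinuousLinearMap.comp_apply, ContinuousLinearMap.apply_apply, smul_eq_mul]
      refine Finset.sum_congr rfl fun α' _ => ?_
      have h4 : ((0 : (Fin m → ℝ) →L[ℝ] (Fin n' → ℝ)).prod
          (ContinuousLinearMap.pi fun β' => ∑ β, Φm x β' β • ContinuousLinearMap.proj β))
            (Pi.single α (1:ℝ)) = ((0, fun β' => Φm x β' α) :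
            (Fin n' → ℝ) × (Fin m' → ℝ)) := by
        refine Prod.ext (by simp) ?_
        funext β'
        simp [ContinuousLinearMap.sum_apply, Pi.single_apply, mul_ite]
      rw [h4]
      ring
    have hpdθ'x : ∀ (z' : (Fin m' → ℝ) × (Fin m' → ℝ)) (k : Fin n'),
        pd (fun t => thetaL L' t (fun α'' => ∑ β, Φm x α'' β * y β) z') (φ x) k
        = ∑ α', HG L' pt ((Pi.single k 1, 0) : (Fin n' → ℝ) × (Fin m' → ℝ))
            (0, Pi.single α' 1) * z'.1 α' := by
      intro z' k
      simp only [hθ']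
      have hψ3 : HasFDerivAt
          (fun t : Fin n' → ℝ => ((t, fun α'' => ∑ β, Φm x α'' β * y β) :
            (Fin n' → ℝ) × (Fin m' → ℝ)))
          ((ContinuousLinearMap.id ℝ _).prod (0 : (Fin n' → ℝ) →L[ℝ] (Fin m' → ℝ))) (φ x) :=
        (hasFDerivAt_id (φ x)).prodMk (hasFDerivAt_const _ (φ x))
      have hsum : HasFDerivAt
          (fun t => ∑ α', DG L' ((t, fun α'' => ∑ β, Φm x α'' β * y β) :
              (Fin n' → ℝ) × (Fin m' → ℝ)) (0, Pi.single α' 1) * z'.1 α')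
          (∑ α', z'.1 α'
            • ((ContinuousLinearMap.apply ℝ ℝ ((0, Pi.single α' 1) :
                (Fin n' → ℝ) × (Fin m' → ℝ))).comp ((HG L' pt).comp
              ((ContinuousLinearMap.id ℝ _).prod
                (0 : (Fin n' → ℝ) →L[ℝ] (Fin m' → ℝ)))))) (φ x) := by
        refine HasFDerivAt.fun_sum fun α' _ => ?_
        exact (hasFDerivAt_DG_comp L' hL' hψ3 ((0, Pi.single α' 1) :
          (Fin n' → ℝ) × (Fin m' → ℝ))).mul_const (z'.1 α')
      rw [pd_of_hasFDerivAt hsum k]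
      simp only [ContinuousLinearMap.sum_apply, ContinuousLinearMap.smul_apply,
        ContinuousLinearMap.comp_apply, ContinuousLinearMap.apply_apply, smul_eq_mul,
        ContinuousLinearMap.prod_apply, ContinuousLinearMap.id_apply,
        ContinuousLinearMap.zero_apply]
      exact Finset.sum_congr rfl fun α' _ => by ring
    have hpdθ'y : ∀ (z' : (Fin m' → ℝ) × (Fin m' → ℝ)) (β' : Fin m'),
        pd (fun t => thetaL L' (φ x) t z') (fun α'' => ∑ β, Φm x α'' β * y β) β'
        = ∑ α', HG L' pt ((0, Pi.single β' 1) : (Fin n' → ℝ) × (Fin m' → ℝ))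
            (0, Pi.single α' 1) * z'.1 α' := by
      intro z' β'
      simp only [hθ']
      have hψ4 : HasFDerivAt
          (fun t : Fin m' → ℝ => ((φ x, t) : (Fin n' → ℝ) × (Fin m' → ℝ)))
          ((0 : (Fin m' → ℝ) →L[ℝ] (Fin n' → ℝ)).prod (ContinuousLinearMap.id ℝ _))
          (fun α'' => ∑ β, Φm x α'' β * y β) :=
        (hasFDerivAt_const (φ x) _).prodMk (hasFDerivAt_id _)
      have hsum : HasFDerivAt
          (fun t => ∑ α', DG L' ((φ x, t) : (Fin n' → ℝ) × (Fin m' → ℝ))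
            (0, Pi.single α' 1) * z'.1 α')
          (∑ α', z'.1 α'
            • ((ContinuousLinearMap.apply ℝ ℝ ((0, Pi.single α' 1) :
                (Fin n' → ℝ) × (Fin m' → ℝ))).comp ((HG L' pt).comp
              ((0 : (Fin m' → ℝ) →L[ℝ] (Fin n' → ℝ)).prod (ContinuousLinearMap.id ℝ _)))))
          (fun α'' => ∑ β, Φm x α'' β * y β) := by
        refine HasFDerivAt.fun_sum fun α' _ => ?_
        exact (hasFDerivAt_DG_comp L' hL' hψ4 ((0, Pi.single α' 1) :
          (Fin n' → ℝ) × (Fin m' → ℝ))).mul_const (z'.1 α')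
      rw [pd_of_hasFDerivAt hsum β']
      simp only [ContinuousLinearMap.sum_apply, ContinuousLinearMap.smul_apply,
        ContinuousLinearMap.comp_apply, ContinuousLinearMap.apply_apply, smul_eq_mul,
        ContinuousLinearMap.prod_apply, ContinuousLinearMap.id_apply,
        ContinuousLinearMap.zero_apply]
      exact Finset.sum_congr rfl fun α' _ => by ring
    -- key: combined first-slot vectors agree (uses admissibility)
    have hkey : ∀ (b v : Fin m → ℝ) (α' : Fin m'),
        (∑ i, (∑ μ, ρ x μ i * b μ) * HG L' pt (Dψ (Pi.single i 1)) (0, Pi.single α' 1))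
          + (∑ α, v α * HG L' pt ((0, fun β' => Φm x β' α) :
              (Fin n' → ℝ) × (Fin m' → ℝ)) (0, Pi.single α' 1))
        = (∑ k, (∑ β', ρ' (φ x) β' k * (∑ β, Φm x β' β * b β))
              * HG L' pt ((Pi.single k 1, 0) : (Fin n' → ℝ) × (Fin m' → ℝ))
                (0, Pi.single α' 1))
          + ∑ β', ((∑ i, pd (fun x' => ∑ β, Φm x' β' β * y β) x i
                * (∑ γ, ρ x γ i * b γ)) + ∑ β, Φm x β' β * v β)
              * HG L' pt ((0, Pi.single β' 1) : (Fin n' → ℝ) × (Fin m' → ℝ))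
                (0, Pi.single α' 1) := by
      intro b v α'
      set ℓ : ((Fin n' → ℝ) × (Fin m' → ℝ)) →L[ℝ] ℝ :=
        (ContinuousLinearMap.apply ℝ ℝ ((0, Pi.single α' 1) :
          (Fin n' → ℝ) × (Fin m' → ℝ))).comp (HG L' pt) with hℓdef
      have hℓ : ∀ W, HG L' pt W ((0, Pi.single α' 1) :
          (Fin n' → ℝ) × (Fin m' → ℝ)) = ℓ W := fun W => rfl
      simp only [hℓ]
      have e1 : (∑ i, (∑ μ, ρ x μ i * b μ) * ℓ (Dψ (Pi.single i 1)))
            + (∑ α, v α * ℓ ((0, fun β' => Φm x β' α) :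
                (Fin n' → ℝ) × (Fin m' → ℝ)))
          = ℓ ((∑ i, (∑ μ, ρ x μ i * b μ) • Dψ (Pi.single i 1))
            + ∑ α, v α • ((0, fun β' => Φm x β' α) :
                (Fin n' → ℝ) × (Fin m' → ℝ))) := by
        rw [map_add, map_sum, map_sum]
        simp only [map_smul, smul_eq_mul]
      have e2 : (∑ k, (∑ β', ρ' (φ x) β' k * (∑ β, Φm x β' β * b β))
              * ℓ ((Pi.single k 1, 0) : (Fin n' → ℝ) × (Fin m' → ℝ)))
            + (∑ β', ((∑ i, pd (fun x' => ∑ β, Φm x' β' β * y β) x i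
                * (∑ γ, ρ x γ i * b γ)) + ∑ β, Φm x β' β * v β)
              * ℓ ((0, Pi.single β' 1) : (Fin n' → ℝ) × (Fin m' → ℝ)))
          = ℓ ((∑ k, (∑ β', ρ' (φ x) β' k * (∑ β, Φm x β' β * b β))
                • ((Pi.single k 1, 0) : (Fin n' → ℝ) × (Fin m' → ℝ)))
            + ∑ β', ((∑ i, pd (fun x' => ∑ β, Φm x' β' β * y β) x i
                * (∑ γ, ρ x γ i * b γ)) + ∑ β, Φm x β' β * v β)
              • ((0, Pi.single β' 1) : (Fin n' → ℝ) × (Fin m' → ℝ))) := by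
        rw [map_add, map_sum, map_sum]
        simp only [map_smul, smul_eq_mul]
      rw [e1, e2]
      congr 1
      refine Prod.ext ?_ ?_
      · -- first components: admissibility
        funext k
        simp only [Prod.fst_add, Prod.fst_sum, Prod.smul_fst, hDψ, Finset.sum_apply,
          Pi.add_apply, Pi.smul_apply, smul_eq_mul, Prod.fst_zero, Pi.zero_apply,
          mul_zero, Finset.sum_const_zero, add_zero, Pi.single_apply, mul_ite, mul_one,
          Finset.sum_ite_eq, Finset.sum_ite_eq', Finset.mem_univ, if_true]
        have step1 : ∑ i, (∑ μ, ρ x μ i * b μ) * pd (fun x1 => φ x1 k) x i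
            = ∑ μ, b μ * ∑ i, ρ x μ i * pd (fun x' => φ x' k) x i := by
          simp only [Finset.sum_mul, Finset.mul_sum]
          rw [Finset.sum_comm]
          exact Finset.sum_congr rfl fun μ _ => Finset.sum_congr rfl fun i _ => by ring
        rw [step1]
        simp only [hadm x _ k]
        simp only [Finset.mul_sum]
        rw [Finset.sum_comm]
        exact Finset.sum_congr rfl fun β' _ => Finset.sum_congr rfl fun μ _ => by ring
      · -- second components
        funext β'
        simp only [Prod.snd_add, Prod.snd_sum, Prod.smul_snd, hDψ, Finset.sum_apply,
          Pi.add_apply, Pi.smul_apply, smul_eq_mul, Prod.snd_zero, Pi.zero_apply,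
          mul_zero, Finset.sum_const_zero, add_zero, Pi.single_apply, mul_ite, mul_one,
          Finset.sum_ite_eq, Finset.sum_ite_eq', Finset.mem_univ, if_true]
        simp only [h_pdΦy]
        rw [zero_add]
        congr 1
        · exact Finset.sum_congr rfl fun i _ => by ring
        · exact Finset.sum_congr rfl fun β _ => by ring
    simp only [omegaL, neg_inj, d1, dirDer, cbr]
    rw [show phiFib Φm x y = fun α'' => ∑ β, Φm x α'' β * y β from rfl]
    simp only [hpdθx, hpdθy, hpdθ'x, hpdθ'y]
    simp only [hθL, hθ']
    simp only [tphiFib, phiFib_eq]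
    rw [← hpt]
    -- the structure-function remainder identity
    have hmor : ∀ α' : Fin m',
        (∑ i, (∑ α, ρ x α i * z₁.1 α) * (∑ β, z₂.1 β * pd (fun x1 => Φm x1 α' β) x i))
        - (∑ i, (∑ α, ρ x α i * z₂.1 α) * (∑ β, z₁.1 β * pd (fun x1 => Φm x1 α' β) x i))
        + ∑ μ', ∑ ν', (C' (φ x) α' μ' ν' * ∑ β, Φm x μ' β * z₁.1 β) * ∑ β, Φm x ν' β * z₂.1 β
        = ∑ γ, Φm x α' γ * ∑ μ, ∑ ν, C x γ μ ν * z₁.1 μ * z₂.1 ν := by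
      intro α'
      have base : ∑ μ, ∑ ν, z₁.1 μ * z₂.1 ν *
          ((∑ i, ρ x μ i * pd (fun x' => Φm x' α' ν) x i)
            - (∑ i, ρ x ν i * pd (fun x' => Φm x' α' μ) x i)
            + (∑ β', ∑ γ', C' (φ x) α' β' γ' * Φm x β' μ * Φm x γ' ν))
          = ∑ μ, ∑ ν, z₁.1 μ * z₂.1 ν * ∑ γ, Φm x α' γ * C x γ μ ν :=
        Finset.sum_congr rfl fun μ _ => Finset.sum_congr rfl fun ν _ => by
          rw [hmorph x α' μ ν]
      have e1 := piece1 z₁.1 z₂.1 (fun μ i => ρ x μ i)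
        (fun ν i => pd (fun x1 => Φm x1 α' ν) x i)
      have e2 := piece1 z₂.1 z₁.1 (fun μ i => ρ x μ i)
        (fun ν i => pd (fun x1 => Φm x1 α' ν) x i)
      have e3 := piece3 z₁.1 z₂.1 (C' (φ x) α') (Φm x)
      have e4 := piece4 z₁.1 z₂.1 (fun γ => Φm x α' γ) (C x)
      rw [← e1, ← e2, ← e3, ← e4]
      rw [show (∑ μ, ∑ ν, z₂.1 μ * z₁.1 ν * ∑ i, ρ x μ i * pd (fun x1 => Φm x1 α' ν) x i)
          = ∑ μ, ∑ ν, z₁.1 μ * z₂.1 ν * ∑ i, ρ x ν i * pd (fun x' => Φm x' α' μ) x i from by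
        rw [Finset.sum_comm]
        exact Finset.sum_congr rfl fun _ _ => Finset.sum_congr rfl fun _ _ => by ring]
      rw [show (∑ μ, ∑ ν, z₁.1 μ * z₂.1 ν * ∑ i, ρ x μ i * pd (fun x1 => Φm x1 α' ν) x i)
          = ∑ μ, ∑ ν, z₁.1 μ * z₂.1 ν * ∑ i, ρ x μ i * pd (fun x' => Φm x' α' ν) x i from rfl]
      rw [← base]
      simp only [mul_sub, mul_add, Finset.sum_sub_distrib, Finset.sum_add_distrib]
    -- regroup all six double sums so that α' is outermost
    rw [regroup1 (fun i => ∑ α, ρ x α i * z₁.1 α)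
        (fun α' => ∑ β, Φm x α' β * z₂.1 β)
        (fun α' => DG L' pt (0, Pi.single α' 1))
        (fun i α' => HG L' pt (Dψ (Pi.single i 1)) (0, Pi.single α' 1))
        (fun i α' => ∑ β, z₂.1 β * pd (fun x1 => Φm x1 α' β) x i),
      regroup1 (fun i => ∑ α, ρ x α i * z₂.1 α)
        (fun α' => ∑ β, Φm x α' β * z₁.1 β)
        (fun α' => DG L' pt (0, Pi.single α' 1))
        (fun i α' => HG L' pt (Dψ (Pi.single i 1)) (0, Pi.single α' 1))
        (fun i α' => ∑ β, z₁.1 β * pd (fun x1 => Φm x1 α' β) x i),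
      regroup2 (fun c => z₁.2 c) (fun α' => ∑ β, Φm x α' β * z₂.1 β)
        (fun c α' => HG L' pt (0, fun β' => Φm x β' c) (0, Pi.single α' 1)),
      regroup2 (fun c => z₂.2 c) (fun α' => ∑ β, Φm x α' β * z₁.1 β)
        (fun c α' => HG L' pt (0, fun β' => Φm x β' c) (0, Pi.single α' 1)),
      regroup2 (fun k => ∑ β', ρ' (φ x) β' k * ∑ β, Φm x β' β * z₁.1 β)
        (fun α' => ∑ β, Φm x α' β * z₂.1 β)
        (fun k α' => HG L' pt (Pi.single k 1, 0) (0, Pi.single α' 1)),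
      regroup2 (fun k => ∑ β', ρ' (φ x) β' k * ∑ β, Φm x β' β * z₂.1 β)
        (fun α' => ∑ β, Φm x α' β * z₁.1 β)
        (fun k α' => HG L' pt (Pi.single k 1, 0) (0, Pi.single α' 1)),
      regroup2 (fun β' => (∑ i, pd (fun x' => ∑ β, Φm x' β' β * y β) x i
            * ∑ γ, ρ x γ i * z₁.1 γ) + ∑ β, Φm x β' β * z₁.2 β)
        (fun α' => ∑ β, Φm x α' β * z₂.1 β)
        (fun β' α' => HG L' pt (0, Pi.single β' 1) (0, Pi.single α' 1)),
      regroup2 (fun β' => (∑ i, pd (fun x' => ∑ β, Φm x' β' β * y β) x i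
            * ∑ γ, ρ x γ i * z₂.1 γ) + ∑ β, Φm x β' β * z₂.2 β)
        (fun α' => ∑ β, Φm x α' β * z₁.1 β)
        (fun β' α' => HG L' pt (0, Pi.single β' 1) (0, Pi.single α' 1))]
    simp only [← Finset.sum_add_distrib, ← Finset.sum_sub_distrib]
    refine Finset.sum_congr rfl fun α' _ => ?_
    linear_combination (hkey z₁.1 z₁.2 α') * (∑ β, Φm x α' β * z₂.1 β)
      - (hkey z₂.1 z₂.2 α') * (∑ β, Φm x α' β * z₁.1 β)
      + (DG L' pt (0, Pi.single α' 1)) * (hmor α')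
  · -- energy
    intro x y
    simp only [energyL, phiFib_eq]
    simp only [pd_comp_lin L' hL', pd_snd L' hL']
    congr 1
    simp only [Finset.mul_sum, Finset.sum_mul]
    rw [Finset.sum_comm]
    exact Finset.sum_congr rfl fun α' _ => Finset.sum_congr rfl fun α _ => by ring
end
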